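/- arXiv:1610.03209 — 15 statements merged into one kernel-verified Lean document; each statement's English description precedes it below -/
import Mathlib

section
/- If a closed subspace Y of a Banach space X has the 1½-ball property, then for all x ∈ X and y ∈ Y one has ‖x − y‖ = d(x, Y) + d(y, P_Y(x)); in particular P_Y(x) is nonempty for every x. -/
/-- If a closed subspace `Y` of a Banach space `X` has the 1½-ball property,
then for all `x ∈ X` and `y ∈ Y`, `‖x − y‖ = d(x, Y) + d(y, P_Y(x))`; in particular
`P_Y(x)` is nonempty for every `x`. -/
theorem stmt_2 {X : Type*} [NormedAddCommGroup X] [NormedSpace ℝ X] [CompleteSpace X]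
    (Y : Subspace ℝ X) (hYcl : IsClosed (Y : Set X))
    (hball : ∀ (x y : X) (r s : ℝ), 0 < r → 0 < s → y ∈ Y → ‖x - y‖ < r + s →
      (Metric.closedBall x r ∩ (Y : Set X)).Nonempty →
      (Metric.closedBall x r ∩ Metric.closedBall y s ∩ (Y : Set X)).Nonempty) :
    ∀ x : X,
      {z : X | z ∈ Y ∧ ‖x - z‖ = Metric.infDist x (Y : Set X)}.Nonempty ∧
      ∀ y ∈ Y, ‖x - y‖ = Metric.infDist x (Y : Set X) +
        Metric.infDist y {z : X | z ∈ Y ∧ ‖x - z‖ = Metric.infDist x (Y : Set X)} := by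
  intro x
  set d := Metric.infDist x (Y : Set X) with hd
  have hYne : (Y : Set X).Nonempty := ⟨0, Y.zero_mem⟩
  have hd0 : 0 ≤ d := Metric.infDist_nonneg
  have hle : ∀ z ∈ Y, d ≤ ‖x - z‖ := by
    intro z hz
    rw [← dist_eq_norm]
    exact Metric.infDist_le_dist_of_mem hz
  -- the basic step from the 1½-ball property
  have step : ∀ (s r' : ℝ), 0 < s → d < r' → ∀ y ∈ Y, ‖x - y‖ < d + s →
      ∃ y', y' ∈ Y ∧ ‖x - y'‖ ≤ r' ∧ ‖y' - y‖ ≤ s := by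
    intro s r' hs hr' y hy hxy
    obtain ⟨z, hz, hzd⟩ := (Metric.infDist_lt_iff hYne).mp (show Metric.infDist x (Y : Set X) < r' from hr')
    have hne : (Metric.closedBall x r' ∩ (Y : Set X)).Nonempty :=
      ⟨z, Metric.mem_closedBall'.mpr hzd.le, hz⟩
    obtain ⟨w, ⟨hw1, hw2⟩, hw3⟩ :=
      hball x y r' s (lt_of_le_of_lt hd0 hr') hs hy (by linarith) hne
    refine ⟨w, hw3, ?_, ?_⟩
    · rw [show ‖x - w‖ = dist w x by rw [dist_eq_norm, norm_sub_rev]]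
      exact Metric.mem_closedBall.mp hw1
    · rw [show ‖w - y‖ = dist w y by rw [dist_eq_norm]]
      exact Metric.mem_closedBall.mp hw2
  -- iterating the step: approximation lemma
  have aux : ∀ e > (0:ℝ), ∀ y ∈ Y, ‖x - y‖ < d + e →
      ∃ p, p ∈ Y ∧ ‖x - p‖ = d ∧ ‖p - y‖ ≤ 2 * e := by
    intro e he y hy hxy
    have key : ∀ (n : ℕ) (z : X), z ∈ Y → ‖x - z‖ < d + e * (1/2)^n →
        ∃ z', z' ∈ Y ∧ ‖x - z'‖ < d + e * (1/2)^(n+1) ∧ ‖z' - z‖ ≤ e * (1/2)^n := by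
      intro n z hz hxz
      have hp : (0:ℝ) < e * (1/2)^n := by positivity
      have hp2 : (0:ℝ) < e * (1/2)^(n+2) := by positivity
      obtain ⟨z', hz'Y, hz'1, hz'2⟩ :=
        step (e * (1/2)^n) (d + e * (1/2)^(n+2)) hp (by linarith) z hz hxz
      refine ⟨z', hz'Y, ?_, hz'2⟩
      have : e * (1/2)^(n+2) < e * (1/2)^(n+1) := by
        apply mul_lt_mul_of_pos_left _ he
        apply pow_lt_pow_right_of_lt_one₀ (by norm_num) (by norm_num) (by omega)
      linarith
    choose! g hg1 hg2 hg3 using key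
    set f : ℕ → X := fun n => Nat.rec y (fun n z => g n z) n with hf
    have hf0 : f 0 = y := rfl
    have hfs : ∀ n, f (n+1) = g n (f n) := fun n => rfl
    have inv : ∀ n, f n ∈ Y ∧ ‖x - f n‖ < d + e * (1/2)^n := by
      intro n
      induction n with
      | zero => exact ⟨hy, by rw [hf0]; simpa using hxy⟩
      | succ n ih =>
        rw [hfs]
        exact ⟨hg1 n (f n) ih.1 ih.2, hg2 n (f n) ih.1 ih.2⟩
    have dists : ∀ n, dist (f n) (f (n+1)) ≤ e * (1/2)^n := by
      intro n
      rw [dist_eq_norm, norm_sub_rev, hfs]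
      exact hg3 n (f n) (inv n).1 (inv n).2
    have hcau : CauchySeq f := cauchySeq_of_le_geometric (1/2) e (by norm_num) dists
    obtain ⟨p, hp⟩ := cauchySeq_tendsto_of_complete hcau
    have hpY : p ∈ Y := hYcl.mem_of_tendsto hp (Filter.Eventually.of_forall fun n => (inv n).1)
    have hxp : ‖x - p‖ = d := by
      refine le_antisymm ?_ (hle p hpY)
      have h1 : Filter.Tendsto (fun n => ‖x - f n‖) Filter.atTop (nhds ‖x - p‖) :=
        ((continuous_const.sub continuous_id).norm.continuousAt.tendsto.comp hp)
      have h2 : Filter.Tendsto (fun n => d + e * (1/2:ℝ)^n) Filter.atTop (nhds (d + e * 0)) := by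
        exact tendsto_const_nhds.add
          ((tendsto_pow_atTop_nhds_zero_of_lt_one (by norm_num) (by norm_num)).const_mul e)
      have := le_of_tendsto_of_tendsto' h1 h2 (fun n => (inv n).2.le)
      simpa using this
    have hdist : dist (f 0) p ≤ e / (1 - 1/2) :=
      dist_le_of_le_geometric_of_tendsto₀ (1/2) e (by norm_num) dists hp
    refine ⟨p, hpY, hxp, ?_⟩
    rw [hf0] at hdist
    rw [show ‖p - y‖ = dist y p by rw [dist_eq_norm, norm_sub_rev]]
    calc dist y p ≤ e / (1 - 1/2) := hdist
      _ = 2 * e := by ring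
  set P := {z : X | z ∈ Y ∧ ‖x - z‖ = d} with hP
  -- P is nonempty
  have hPne : P.Nonempty := by
    obtain ⟨p, h1, h2, _⟩ := aux (‖x - 0‖ - d + 1) (by have := hle 0 Y.zero_mem; linarith)
      0 Y.zero_mem (by linarith)
    exact ⟨p, h1, h2⟩
  refine ⟨hPne, fun y hy => ?_⟩
  have easy : ‖x - y‖ - d ≤ Metric.infDist y P := by
    by_contra h
    push_neg at h
    obtain ⟨q, ⟨hqY, hqd⟩, hq⟩ := (Metric.infDist_lt_iff hPne).mp h
    rw [dist_eq_norm] at hq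
    have : ‖x - y‖ ≤ ‖x - q‖ + ‖q - y‖ := by
      have := norm_add_le (x - q) (q - y)
      simpa using this
    rw [norm_sub_rev] at hq
    linarith
  have hard : Metric.infDist y P ≤ ‖x - y‖ - d := by
    by_cases hxy : ‖x - y‖ = d
    · have : y ∈ P := ⟨hy, hxy⟩
      have h0 : Metric.infDist y P ≤ dist y y := Metric.infDist_le_dist_of_mem this
      simp at h0
      linarith
    · have hρ : 0 < ‖x - y‖ - d := by
        rcases lt_or_eq_of_le (hle y hy) with h | h
        · linarith
        · exact absurd h.symm hxy
      refine le_of_forall_pos_le_add ?_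
      intro ε hε
      obtain ⟨y₁, hy₁Y, hy₁1, hy₁2⟩ :=
        step (‖x - y‖ - d + ε/4) (d + ε/8) (by linarith) (by linarith) y hy (by linarith)
      obtain ⟨p, hpY, hpd, hpy₁⟩ := aux (ε/4) (by linarith) y₁ hy₁Y (by linarith)
      have hpP : p ∈ P := ⟨hpY, hpd⟩
      have : Metric.infDist y P ≤ dist y p := Metric.infDist_le_dist_of_mem hpP
      have htri : dist y p ≤ ‖y₁ - y‖ + ‖p - y₁‖ := by
        rw [dist_eq_norm, norm_sub_rev]
        calc ‖p - y‖ ≤ ‖p - y₁‖ + ‖y₁ - y‖ := by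
              have := norm_add_le (p - y₁) (y₁ - y); simpa using this
          _ = ‖y₁ - y‖ + ‖p - y₁‖ := by ring
      linarith
  linarith
end

section
/- Let Y be a closed subspace of a Banach space X such that for all x ∈ X, ‖x‖ = d(x, Y) + d(0, P_Y(x)). Then Y has the 1½-ball property. -/
/-!
Translating by `y`, we may assume `y = 0`. Let `d = d(x, Y) ≤ r`. Since
`d + d(0, P_Y x) = ‖x‖ < r + s`, some nearest point `w ∈ P_Y x` has `‖w‖ < (r - d) + s`.
Sliding `w` along the segment `[w, 0] ⊆ Y` by at most `r - d` brings it into `closedBall 0 s`,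
while its distance to `x` grows from `d` to at most `r`.
-/

open Metric

theorem exists_mem_segment_dist_le_of_dist_le_add {E : Type*} [NormedAddCommGroup E]
    [NormedSpace ℝ E] {a b : E} {r s : ℝ} (hr : 0 ≤ r) (hs : 0 ≤ s)
    (hab : dist a b ≤ r + s) :
    ∃ z ∈ segment ℝ a b, dist a z ≤ r ∧ dist z b ≤ s := by
  rcases le_or_gt (dist a b) r with hle | hgt
  · exact ⟨b, right_mem_segment ℝ a b, hle, by simpa using hs⟩
  · have hpos : 0 < dist a b := hr.trans_lt hgt
    set c := r / dist a b
    have hc : c ∈ Set.Icc (0 : ℝ) 1 := ⟨by positivity, (div_le_one hpos).2 hgt.le⟩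
    refine ⟨AffineMap.lineMap a b c, lineMap_mem_segment ℝ a b hc, ?_, ?_⟩
    · rw [dist_left_lineMap, Real.norm_of_nonneg hc.1, div_mul_cancel₀ _ hpos.ne']
    · rw [dist_lineMap_right, Real.norm_of_nonneg (sub_nonneg.2 hc.2), sub_mul, one_mul,
        div_mul_cancel₀ _ hpos.ne']
      linarith

namespace Submodule

variable {X : Type*} [NormedAddCommGroup X] [NormedSpace ℝ X] (Y : Submodule ℝ X)

def metricProj (x : X) : Set X :=
  {z : X | z ∈ Y ∧ ‖x - z‖ = infDist x (Y : Set X)}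

theorem exists_mem_dist_le_norm_le {x : X} {r s : ℝ} (hs : 0 ≤ s)
    (hP : (Y.metricProj x).Nonempty)
    (hx : ‖x‖ = infDist x (Y : Set X) + infDist 0 (Y.metricProj x))
    (hxrs : ‖x‖ < r + s) (hdr : infDist x (Y : Set X) ≤ r) :
    ∃ u ∈ Y, dist x u ≤ r ∧ ‖u‖ ≤ s := by
  set d := infDist x (Y : Set X)
  have hP_lt : infDist 0 (Y.metricProj x) < r - d + s := by linarith
  obtain ⟨w, ⟨hwY, hxw⟩, hw⟩ := (infDist_lt_iff hP).1 hP_lt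
  obtain ⟨u, hu, hwu, hu0⟩ := exists_mem_segment_dist_le_of_dist_le_add (sub_nonneg.2 hdr) hs
    ((dist_comm w 0).trans_le hw.le)
  refine ⟨u, Y.convex.segment_subset hwY Y.zero_mem hu, ?_, by simpa using hu0⟩
  calc dist x u ≤ dist x w + dist w u := dist_triangle x w u
    _ ≤ d + (r - d) := by rw [dist_eq_norm, hxw]; gcongr
    _ = r := by ring

end Submodule

theorem stmt_3_general {X : Type*} [NormedAddCommGroup X] [NormedSpace ℝ X]
    (Y : Subspace ℝ X)
    (hprox : ∀ x : X, {z : X | z ∈ Y ∧ ‖x - z‖ = Metric.infDist x (Y : Set X)}.Nonempty)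
    (hid : ∀ x : X, ‖x‖ = Metric.infDist x (Y : Set X) +
      Metric.infDist (0 : X) {z : X | z ∈ Y ∧ ‖x - z‖ = Metric.infDist x (Y : Set X)}) :
    ∀ (x y : X) (r s : ℝ), 0 < r → 0 < s → y ∈ Y → ‖x - y‖ < r + s →
      (Metric.closedBall x r ∩ (Y : Set X)).Nonempty →
      (Metric.closedBall x r ∩ Metric.closedBall y s ∩ (Y : Set X)).Nonempty := by
  rintro x y r s - hs hy hxy ⟨z, hxz, hzY⟩
  have hdr : infDist (x - y) (Y : Set X) ≤ r :=
    (infDist_le_dist_of_mem (Y.sub_mem hzY hy)).trans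
      ((dist_sub_right x z y).trans_le (mem_closedBall'.1 hxz))
  obtain ⟨u, huY, hxu, hu⟩ :=
    Y.exists_mem_dist_le_norm_le hs.le (hprox _) (hid _) hxy hdr
  refine ⟨u + y, ⟨?_, ?_⟩, Y.add_mem huY hy⟩
  · rwa [mem_closedBall, dist_comm, ← dist_sub_right x (u + y) y, add_sub_cancel_right]
  · rwa [mem_closedBall, dist_add_self_left]

/-- If `Y` is a closed (proximinal) subspace of a Banach space `X` such that
`‖x‖ = d(x, Y) + d(0, P_Y(x))` for all `x ∈ X`, then `Y` has the 1½-ball property. -/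
theorem stmt_3 {X : Type*} [NormedAddCommGroup X] [NormedSpace ℝ X] [CompleteSpace X]
    (Y : Subspace ℝ X) (hYcl : IsClosed (Y : Set X))
    (hprox : ∀ x : X, {z : X | z ∈ Y ∧ ‖x - z‖ = Metric.infDist x (Y : Set X)}.Nonempty)
    (hid : ∀ x : X, ‖x‖ = Metric.infDist x (Y : Set X) +
      Metric.infDist (0 : X) {z : X | z ∈ Y ∧ ‖x - z‖ = Metric.infDist x (Y : Set X)}) :
    ∀ (x y : X) (r s : ℝ), 0 < r → 0 < s → y ∈ Y → ‖x - y‖ < r + s →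
      (Metric.closedBall x r ∩ (Y : Set X)).Nonempty →
      (Metric.closedBall x r ∩ Metric.closedBall y s ∩ (Y : Set X)).Nonempty :=
  stmt_3_general Y hprox hid
end

section
/- Every closed subspace Y of a Banach space X that has the 1½-ball property is uniformly proximinal. -/
/-- Every closed subspace `Y` of a Banach space `X` having the 1½-ball
property is uniformly proximinal: for every `ε > 0` and `R > 0` there is `δ > 0` such
that whenever `d(x, Y) ≤ R` and `y ∈ Y` with `‖x − y‖ < R + δ`, there is `y' ∈ Y` with
`‖y − y'‖ < ε` and `‖x − y'‖ ≤ R`. -/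
theorem stmt_4 {X : Type*} [NormedAddCommGroup X] [NormedSpace ℝ X] [CompleteSpace X]
    (Y : Subspace ℝ X) (hYcl : IsClosed (Y : Set X))
    (hball : ∀ (x y : X) (r s : ℝ), 0 < r → 0 < s → y ∈ Y → ‖x - y‖ < r + s →
      (Metric.closedBall x r ∩ (Y : Set X)).Nonempty →
      (Metric.closedBall x r ∩ Metric.closedBall y s ∩ (Y : Set X)).Nonempty) :
    ∀ ε > (0 : ℝ), ∀ R > (0 : ℝ), ∃ δ > (0 : ℝ), ∀ x y : X,
      Metric.infDist x (Y : Set X) ≤ R → y ∈ Y → ‖x - y‖ < R + δ →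
      ∃ y' ∈ Y, ‖y - y'‖ < ε ∧ ‖x - y'‖ ≤ R := by
  intro ε hε R hR
  refine ⟨ε / 4, by positivity, ?_⟩
  intro x y hxY hyY hxy
  set δ : ℝ := ε / 4 with hδdef
  have hδpos : 0 < δ := by positivity
  have hY0 : (Y : Set X).Nonempty := ⟨0, Y.zero_mem⟩
  have step : ∀ n : ℕ, ∀ z : X, z ∈ Y → ‖x - z‖ ≤ R + δ / 2 ^ n →
      ∃ w : X, w ∈ Y ∧ ‖x - w‖ ≤ R + δ / 2 ^ (n + 1) ∧ ‖z - w‖ ≤ δ / 2 ^ n := by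
    intro n z hz hzb
    have h1 : (0:ℝ) < δ / 2 ^ (n + 1) := by positivity
    have h2 : (0:ℝ) < δ / 2 ^ n := by positivity
    have hr : (0:ℝ) < R + δ / 2 ^ (n + 1) := by positivity
    have hlt : ‖x - z‖ < (R + δ / 2 ^ (n + 1)) + δ / 2 ^ n := by linarith
    have hne : (Metric.closedBall x (R + δ / 2 ^ (n + 1)) ∩ (Y : Set X)).Nonempty := by
      have hlt2 : Metric.infDist x (Y : Set X) < R + δ / 2 ^ (n + 1) := by linarith
      obtain ⟨w, hwY, hw⟩ := (Metric.infDist_lt_iff hY0).1 hlt2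
      exact ⟨w, Metric.mem_closedBall.2 (by rw [dist_comm]; exact hw.le), hwY⟩
    obtain ⟨w, ⟨hw1, hw2⟩, hwY⟩ := hball x z (R + δ / 2 ^ (n + 1)) (δ / 2 ^ n) hr h2 hz hlt hne
    refine ⟨w, hwY, ?_, ?_⟩
    · have := Metric.mem_closedBall.1 hw1
      rw [dist_comm] at this
      simpa [dist_eq_norm] using this
    · have := Metric.mem_closedBall.1 hw2
      rw [dist_comm] at this
      simpa [dist_eq_norm] using this
  choose! g hg1 hg2 hg3 using step
  let f : ℕ → X := fun n => Nat.rec y (fun n z => g n z) n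
  have hfs : ∀ n, f (n + 1) = g n (f n) := fun n => rfl
  have hfInv : ∀ n, f n ∈ Y ∧ ‖x - f n‖ ≤ R + δ / 2 ^ n := by
    intro n
    induction n with
    | zero => exact ⟨hyY, by show ‖x - y‖ ≤ R + δ / 2 ^ 0; simpa using hxy.le⟩
    | succ n ih =>
      rw [hfs]
      exact ⟨hg1 n (f n) ih.1 ih.2, hg2 n (f n) ih.1 ih.2⟩
  have hdist : ∀ n, dist (f n) (f (n + 1)) ≤ δ * (1 / 2) ^ n := by
    intro n
    have := hg3 n (f n) (hfInv n).1 (hfInv n).2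
    rw [← hfs] at this
    rw [dist_eq_norm]
    calc ‖f n - f (n + 1)‖ ≤ δ / 2 ^ n := this
    _ = δ * (1 / 2) ^ n := by rw [div_pow, one_pow]; ring
  have hhalf : (1:ℝ) / 2 < 1 := by norm_num
  have hcauchy : CauchySeq f := cauchySeq_of_le_geometric (1/2) δ hhalf hdist
  obtain ⟨y', hy'⟩ := cauchySeq_tendsto_of_complete hcauchy
  have hy'Y : y' ∈ Y := hYcl.mem_of_tendsto hy' (Filter.Eventually.of_forall fun n => (hfInv n).1)
  have hd0 : dist (f 0) y' ≤ δ / (1 - 1/2) :=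
    dist_le_of_le_geometric_of_tendsto₀ (1/2) δ hhalf hdist hy'
  have hyy' : ‖y - y'‖ < ε := by
    have hf0 : f 0 = y := rfl
    rw [← dist_eq_norm, ← hf0]
    have : δ / (1 - 1/2) = ε / 2 := by rw [hδdef]; ring
    rw [this] at hd0
    linarith
  have hxby : ‖x - y'‖ ≤ R := by
    have h1 : Filter.Tendsto (fun n => ‖x - f n‖) Filter.atTop (nhds ‖x - y'‖) :=
      ((continuous_const.sub continuous_id).norm.continuousAt.tendsto.comp hy')
    have h2 : Filter.Tendsto (fun n : ℕ => R + δ / 2 ^ n) Filter.atTop (nhds R) := by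
      have : Filter.Tendsto (fun n : ℕ => δ / 2 ^ n) Filter.atTop (nhds 0) := by
        simpa [div_eq_mul_inv, ← inv_pow] using
          tendsto_const_nhds.mul (tendsto_pow_atTop_nhds_zero_of_lt_one
            (by norm_num : (0:ℝ) ≤ (2:ℝ)⁻¹) (by norm_num : (2:ℝ)⁻¹ < 1))
      simpa using tendsto_const_nhds.add this
    exact le_of_tendsto_of_tendsto' h1 h2 fun n => (hfInv n).2
  exact ⟨y', hy'Y, hyy', hxby⟩
end

section
/- If a closed convex subset C of a Banach space X is uniformly proximinal, then C is strongly proximinal: C is proximinal, and for every x ∈ X and ε > 0 there exists δ > 0 such that P_C(x, δ) ⊆ P_C(x) + ε B_X, where P_C(x, δ) = {z ∈ C : ‖x − z‖ ≤ d(x, C) + δ}. -/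
/-!
If `d = d(x, C) > 0`, uniform proximinality at radius `R = d` and tolerance `ε` gives `δ` such
that every `z ∈ C` with `‖x - z‖ < d + δ` lies within `ε` of some `y' ∈ C` with `‖x - y'‖ ≤ d`,
i.e. of a nearest point. If `d = 0`, then `x ∈ C` because `C` is closed, and `x` itself is the
nearest point. Proximinality follows since `C` meets every `P_C(x, δ)` with `δ > 0`.
-/

open Metric

section

variable {X : Type*} [SeminormedAddCommGroup X]

def UniformlyProximinal (C : Set X) : Prop :=
  ∀ ε > (0 : ℝ), ∀ R > (0 : ℝ), ∃ δ > (0 : ℝ), ∀ x ∈ {x : X | infDist x C ≤ R},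
    ∀ y ∈ C, ‖x - y‖ < R + δ → ∃ y' ∈ C, ‖y - y'‖ < ε ∧ ‖x - y'‖ ≤ R

/-- The metric projection `P_C(x)`. -/
def metricProj (C : Set X) (x : X) : Set X :=
  {w | w ∈ C ∧ ‖x - w‖ = infDist x C}

def Proximinal (C : Set X) : Prop :=
  ∀ x, (metricProj C x).Nonempty

def StronglyProximinal (C : Set X) : Prop :=
  Proximinal C ∧ ∀ x, ∀ ε > (0 : ℝ), ∃ δ > (0 : ℝ), ∀ z ∈ C,
    ‖x - z‖ ≤ infDist x C + δ → ∃ w ∈ metricProj C x, ‖z - w‖ ≤ ε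

theorem mem_metricProj_of_norm_sub_le {C : Set X} {x w : X} (hw : w ∈ C)
    (h : ‖x - w‖ ≤ infDist x C) : w ∈ metricProj C x :=
  ⟨hw, h.antisymm (dist_eq_norm x w ▸ infDist_le_dist_of_mem hw)⟩

theorem self_mem_metricProj {C : Set X} {x : X} (hx : x ∈ C) : x ∈ metricProj C x :=
  mem_metricProj_of_norm_sub_le hx (by simp [infDist_nonneg])

theorem UniformlyProximinal.exists_mem_metricProj_near_of_infDist_pos {C : Set X}
    (hC : UniformlyProximinal C) {x : X} (hx : 0 < infDist x C) {ε : ℝ} (hε : 0 < ε) :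
    ∃ δ > (0 : ℝ), ∀ z ∈ C, ‖x - z‖ ≤ infDist x C + δ → ∃ w ∈ metricProj C x, ‖z - w‖ ≤ ε := by
  obtain ⟨δ, hδ, hnear⟩ := hC ε hε _ hx
  refine ⟨δ / 2, half_pos hδ, fun z hz hxz => ?_⟩
  obtain ⟨w, hw, hzw, hxw⟩ := hnear x (le_refl (infDist x C)) z hz (by linarith)
  exact ⟨w, mem_metricProj_of_norm_sub_le hw hxw, hzw.le⟩

theorem IsClosed.exists_mem_metricProj_near_of_infDist_eq_zero {C : Set X} (hC : IsClosed C)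
    {x : X} (hx : infDist x C = 0) {ε : ℝ} (hε : 0 < ε) :
    ∃ δ > (0 : ℝ), ∀ z ∈ C, ‖x - z‖ ≤ infDist x C + δ → ∃ w ∈ metricProj C x, ‖z - w‖ ≤ ε := by
  refine ⟨ε, hε, fun z hz hxz => ⟨x, self_mem_metricProj ?_, ?_⟩⟩
  · exact (hC.mem_iff_infDist_zero ⟨z, hz⟩).mpr hx
  · rwa [norm_sub_rev, hx, zero_add] at hxz

theorem Proximinal.of_exists_mem_metricProj_near {C : Set X} (hne : C.Nonempty)
    (h : ∀ x, ∃ δ > (0 : ℝ), ∀ z ∈ C, ‖x - z‖ ≤ infDist x C + δ → (metricProj C x).Nonempty) :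
    Proximinal C := by
  intro x
  obtain ⟨δ, hδ, hnear⟩ := h x
  obtain ⟨z, hz, hxz⟩ := (infDist_lt_iff hne).mp (lt_add_of_pos_right (infDist x C) hδ)
  exact hnear z hz (dist_eq_norm x z ▸ hxz.le)

theorem UniformlyProximinal.stronglyProximinal {C : Set X} (hC : UniformlyProximinal C)
    (hne : C.Nonempty) (hcl : IsClosed C) : StronglyProximinal C := by
  have hstrong : ∀ x, ∀ ε > (0 : ℝ), ∃ δ > (0 : ℝ), ∀ z ∈ C,
      ‖x - z‖ ≤ infDist x C + δ → ∃ w ∈ metricProj C x, ‖z - w‖ ≤ ε := by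
    intro x ε hε
    rcases (infDist_nonneg (x := x) (s := C)).eq_or_lt with hx | hx
    · exact hcl.exists_mem_metricProj_near_of_infDist_eq_zero hx.symm hε
    · exact hC.exists_mem_metricProj_near_of_infDist_pos hx hε
  refine ⟨Proximinal.of_exists_mem_metricProj_near hne fun x => ?_, hstrong⟩
  obtain ⟨δ, hδ, hnear⟩ := hstrong x 1 one_pos
  exact ⟨δ, hδ, fun z hz hxz => (hnear z hz hxz).imp fun _ hw => hw.1⟩

end

theorem stmt_5_general {X : Type*} [NormedAddCommGroup X]
    (C : Set X) (hne : C.Nonempty) (hcl : IsClosed C)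
    (hunif : ∀ ε > (0 : ℝ), ∀ R > (0 : ℝ), ∃ δ > (0 : ℝ), ∀ x ∈ {x : X | Metric.infDist x C ≤ R},
      ∀ y ∈ C, ‖x - y‖ < R + δ → ∃ y' ∈ C, ‖y - y'‖ < ε ∧ ‖x - y'‖ ≤ R) :
    (∀ x : X, ∃ z ∈ C, ‖x - z‖ = Metric.infDist x C) ∧
    (∀ x : X, ∀ ε > (0 : ℝ), ∃ δ > (0 : ℝ), ∀ z ∈ C,
      ‖x - z‖ ≤ Metric.infDist x C + δ →
      ∃ w, (w ∈ C ∧ ‖x - w‖ = Metric.infDist x C) ∧ ‖z - w‖ ≤ ε) :=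
  UniformlyProximinal.stronglyProximinal hunif hne hcl

/-- A uniformly proximinal nonempty closed convex subset `C` of a Banach
space `X` is strongly proximinal: `C` is proximinal and for every `x ∈ X`, `ε > 0` there
is `δ > 0` with `P_C(x, δ) ⊆ P_C(x) + ε B_X`. -/
theorem stmt_5 {X : Type*} [NormedAddCommGroup X] [NormedSpace ℝ X] [CompleteSpace X]
    (C : Set X) (hne : C.Nonempty) (hcl : IsClosed C) (hcv : Convex ℝ C)
    (hunif : ∀ ε > (0 : ℝ), ∀ R > (0 : ℝ), ∃ δ > (0 : ℝ), ∀ x ∈ {x : X | Metric.infDist x C ≤ R},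
      ∀ y ∈ C, ‖x - y‖ < R + δ → ∃ y' ∈ C, ‖y - y'‖ < ε ∧ ‖x - y'‖ ≤ R) :
    (∀ x : X, ∃ z ∈ C, ‖x - z‖ = Metric.infDist x C) ∧
    (∀ x : X, ∀ ε > (0 : ℝ), ∃ δ > (0 : ℝ), ∀ z ∈ C,
      ‖x - z‖ ≤ Metric.infDist x C + δ →
      ∃ w, (w ∈ C ∧ ‖x - w‖ = Metric.infDist x C) ∧ ‖z - w‖ ≤ ε) :=
  stmt_5_general C hne hcl hunif
end

section
/- If a nonempty closed convex set C in a Banach space X is uniformly proximinal, then the metric projection P_C : X → 2^C is lower Hausdorff semi-continuous: for every x ∈ X and ε > 0 there is a neighborhood N of x such that for every x′ ∈ N, P_C(x) ⊆ P_C(x′) + ε B_X. -/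
/-- If a nonempty closed convex set `C` in a Banach space `X` is uniformly
proximinal, then the metric projection `P_C` is lower Hausdorff semi-continuous: for
every `x ∈ X` and `ε > 0` there is a neighborhood of `x` on which
`P_C(x) ⊆ P_C(x') + ε B_X`. -/
theorem stmt_6 {X : Type*} [NormedAddCommGroup X] [NormedSpace ℝ X] [CompleteSpace X]
    (C : Set X) (hne : C.Nonempty) (hcl : IsClosed C) (hcv : Convex ℝ C)
    (hunif : ∀ ε > (0 : ℝ), ∀ R > (0 : ℝ), ∃ δ > (0 : ℝ), ∀ x : X,
      Metric.infDist x C ≤ R → ∀ y ∈ C, ‖x - y‖ < R + δ →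
      ∃ y' ∈ C, ‖y - y'‖ < ε ∧ ‖x - y'‖ ≤ R) :
    ∀ x : X, ∀ ε > (0 : ℝ), ∃ δ > (0 : ℝ), ∀ x' : X, ‖x' - x‖ < δ →
      ∀ w ∈ {z : X | z ∈ C ∧ ‖x - z‖ = Metric.infDist x C},
        ∃ w' ∈ {z : X | z ∈ C ∧ ‖x' - z‖ = Metric.infDist x' C}, ‖w - w'‖ ≤ ε := by
  intro x ε hε
  set d := Metric.infDist x C with hd
  have hd0 : 0 ≤ d := Metric.infDist_nonneg
  have hRpos : (0:ℝ) < d + ε/8 := by positivity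
  obtain ⟨δ, hδ0, hδ⟩ := hunif (ε/2) (by positivity) (d + ε/8) hRpos
  set R := d + ε/8 with hRdef
  set δ₀ := min (ε/8) (δ/3) with hδ₀def
  have hδ₀pos : 0 < δ₀ := lt_min (by positivity) (by positivity)
  have hδ₀ε : δ₀ ≤ ε/8 := min_le_left _ _
  have hδ₀δ : δ₀ ≤ δ/3 := min_le_right _ _
  clear_value R δ₀
  refine ⟨δ₀, hδ₀pos, ?_⟩
  intro x' hx' w hw
  obtain ⟨hwC, hwx⟩ := hw
  set d' := Metric.infDist x' C with hd'
  have hdd' : d ≤ d' + δ₀ := by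
    have h1 : d ≤ d' + dist x x' := Metric.infDist_le_infDist_add_dist
    have h2 : dist x x' = ‖x' - x‖ := by rw [dist_comm, dist_eq_norm]
    linarith [h1, h2 ▸ hx'.le]
  have hd'd : d' ≤ d + δ₀ := by
    have h1 : d' ≤ d + dist x' x := Metric.infDist_le_infDist_add_dist
    have h2 : dist x' x = ‖x' - x‖ := dist_eq_norm _ _
    linarith [h1, h2 ▸ hx'.le]
  rcases eq_or_lt_of_le (Metric.infDist_nonneg : 0 ≤ d') with h0 | hd'pos
  · -- d' = 0 : x' ∈ C and is its own projection
    have hx'C : x' ∈ C := by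
      rw [hcl.mem_iff_infDist_zero hne]
      exact h0.symm
    refine ⟨x', ⟨hx'C, by rw [sub_self, norm_zero]; exact h0⟩, ?_⟩
    have h1 : ‖w - x'‖ ≤ ‖w - x‖ + ‖x - x'‖ := norm_sub_le_norm_sub_add_norm_sub w x x'
    have h2 : ‖w - x‖ = d := by rw [norm_sub_rev]; exact hwx
    have h3 : ‖x - x'‖ = ‖x' - x‖ := norm_sub_rev _ _
    linarith
  · -- d' > 0 : construct the projection near w
    obtain ⟨δ₁, hδ₁0, hδ₁⟩ := hunif 1 one_pos d' hd'pos
    obtain ⟨y, hyC, hy⟩ := (Metric.infDist_lt_iff hne).mp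
      (show Metric.infDist x' C < d' + δ₁ by rw [← hd']; linarith)
    obtain ⟨w'', hw''C, -, hw''le⟩ := hδ₁ x' le_rfl y hyC (by rw [← dist_eq_norm]; exact hy)
    have hw''eq : ‖x' - w''‖ = d' := le_antisymm hw''le
      (by rw [← dist_eq_norm]; exact Metric.infDist_le_dist_of_mem hw''C)
    have hd'R : d' ≤ R := by rw [hRdef]; linarith
    clear_value d'
    rw [← hd'] at hd'pos
    have hd'ne : d' ≠ 0 := hd'pos.ne'
    set t := d' / R with ht
    have ht0 : 0 < t := div_pos hd'pos hRpos
    have ht1 : t ≤ 1 := (div_le_one hRpos).mpr hd'R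
    have htR : t * R = d' := by rw [ht]; field_simp [hRpos.ne']
    have htinv : t⁻¹ * d' = R := by
      rw [ht, inv_div, div_mul_eq_mul_div, mul_div_assoc, div_self hd'ne, mul_one]
    clear_value t
    set xt := w'' + t⁻¹ • (x' - w'') with hxt
    have hxtw'' : ‖xt - w''‖ = R := by
      have h1 : xt - w'' = t⁻¹ • (x' - w'') := by rw [hxt]; abel
      rw [h1, norm_smul, hw''eq, Real.norm_eq_abs, abs_of_pos (inv_pos.mpr ht0), htinv]
    have hxtC : Metric.infDist xt C ≤ R := by
      calc Metric.infDist xt C ≤ dist xt w'' := Metric.infDist_le_dist_of_mem hw''C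
      _ = R := by rw [dist_eq_norm, hxtw'']
    have hxtx' : ‖xt - x'‖ = R - d' := by
      have h1 : xt - x' = (t⁻¹ - 1) • (x' - w'') := by
        rw [hxt, sub_smul, one_smul]; abel
      have h2 : (1:ℝ) ≤ t⁻¹ := (one_le_inv₀ ht0).mpr ht1
      rw [h1, norm_smul, hw''eq, Real.norm_eq_abs, abs_of_nonneg (by linarith), sub_mul,
        one_mul, htinv]
    have hx'w : ‖x' - w‖ ≤ δ₀ + d := by
      have h1 : ‖x' - w‖ ≤ ‖x' - x‖ + ‖x - w‖ := norm_sub_le_norm_sub_add_norm_sub x' x w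
      linarith [hx'.le, hwx.le, hwx.ge]
    have hxtw : ‖xt - w‖ < R + δ := by
      have h1 : ‖xt - w‖ ≤ ‖xt - x'‖ + ‖x' - w‖ := norm_sub_le_norm_sub_add_norm_sub xt x' w
      have h2 : R - d' ≤ ε/8 + δ₀ := by rw [hRdef]; linarith
      have h3 : δ₀ < δ := by linarith
      rw [hxtx'] at h1
      have : ‖xt - w‖ ≤ R + 2*δ₀ := by rw [hRdef] at *; linarith
      linarith
    obtain ⟨y₁, hy₁C, hwy₁, hxty₁⟩ := hδ xt hxtC w hwC hxtw
    set z := (1 - t) • w'' + t • y₁ with hz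
    have hzC : z ∈ C := hcv hw''C hy₁C (by linarith) ht0.le (by ring)
    have hx'z : x' - z = t • (xt - y₁) := by
      have h2 : t • (t⁻¹ • (x' - w'')) = x' - w'' := smul_inv_smul₀ ht0.ne' _
      rw [hz, hxt, smul_sub, smul_add, h2, sub_smul, one_smul]
      abel
    have hx'zle : ‖x' - z‖ ≤ d' := by
      rw [hx'z, norm_smul, Real.norm_eq_abs, abs_of_pos ht0]
      calc t * ‖xt - y₁‖ ≤ t * R := by nlinarith
      _ = d' := htR
    have hx'zeq : ‖x' - z‖ = d' := le_antisymm hx'zle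
      (by rw [hd', ← dist_eq_norm]; exact Metric.infDist_le_dist_of_mem hzC)
    have hy₁z : ‖y₁ - z‖ ≤ 2 * (R - d') := by
      have h1 : y₁ - z = (1 - t) • (y₁ - w'') := by
        rw [hz, smul_sub, sub_smul, sub_smul, one_smul, one_smul]
        abel
      have h2 : ‖y₁ - w''‖ ≤ 2 * R := by
        have h3 : ‖y₁ - w''‖ ≤ ‖y₁ - xt‖ + ‖xt - w''‖ :=
          norm_sub_le_norm_sub_add_norm_sub y₁ xt w''
        rw [norm_sub_rev y₁ xt] at h3
        linarith [hxtw''.le, hxtw''.ge]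
      rw [h1, norm_smul, Real.norm_eq_abs, abs_of_nonneg (by linarith : (0:ℝ) ≤ 1 - t)]
      nlinarith
    refine ⟨z, ⟨hzC, hx'zeq⟩, ?_⟩
    have h1 : ‖w - z‖ ≤ ‖w - y₁‖ + ‖y₁ - z‖ := norm_sub_le_norm_sub_add_norm_sub w y₁ z
    have h2 : R - d' ≤ ε/8 + δ₀ := by rw [hRdef]; linarith
    linarith
end

section
/- Let Y be a closed subspace of a Banach space X. If the closed unit ball B_Y of Y is uniformly proximinal in X, then Y itself is uniformly proximinal in X. -/
/-- If the closed unit ball `B_Y` of a closed subspace `Y` of a Banach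
space `X` is uniformly proximinal in `X`, then `Y` itself is uniformly proximinal. -/
theorem stmt_7 {X : Type*} [NormedAddCommGroup X] [NormedSpace ℝ X] [CompleteSpace X]
    (Y : Subspace ℝ X) (hYcl : IsClosed (Y : Set X))
    (hballunif : ∀ ε > (0 : ℝ), ∀ R > (0 : ℝ), ∃ δ > (0 : ℝ), ∀ x y : X,
      Metric.infDist x {z : X | z ∈ Y ∧ ‖z‖ ≤ 1} ≤ R →
      y ∈ {z : X | z ∈ Y ∧ ‖z‖ ≤ 1} → ‖x - y‖ < R + δ →
      ∃ y' ∈ {z : X | z ∈ Y ∧ ‖z‖ ≤ 1}, ‖y - y'‖ < ε ∧ ‖x - y'‖ ≤ R) :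
    ∀ ε > (0 : ℝ), ∀ R > (0 : ℝ), ∃ δ > (0 : ℝ), ∀ x y : X,
      Metric.infDist x (Y : Set X) ≤ R → y ∈ Y → ‖x - y‖ < R + δ →
      ∃ y' ∈ Y, ‖y - y'‖ < ε ∧ ‖x - y'‖ ≤ R := by
  intro ε hε R hR
  set lam : ℝ := 2 * R + 2 with hlam_def
  have hlam : (0 : ℝ) < lam := by positivity
  obtain ⟨δ₀, hδ₀, H⟩ := hballunif (ε / lam) (by positivity) (R / lam) (by positivity)
  refine ⟨min (lam * δ₀) 1, by positivity, ?_⟩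
  intro x y hdist hy hxy
  have hδle1 : min (lam * δ₀) 1 ≤ 1 := min_le_right _ _
  set x' : X := lam⁻¹ • (x - y) with hx'
  -- infDist of x' to the unit ball of Y is ≤ R / lam
  have hinf : Metric.infDist x' {z : X | z ∈ Y ∧ ‖z‖ ≤ 1} ≤ R / lam := by
    refine le_of_forall_pos_lt_add fun η hη => ?_
    have hne : ({z : X | z ∈ Y ∧ ‖z‖ ≤ 1} : Set X).Nonempty :=
      ⟨0, Y.zero_mem, by simp⟩
    rw [Metric.infDist_lt_iff hne]
    have hlt : Metric.infDist x (Y : Set X) < R + min (lam * η) 1 :=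
      lt_of_le_of_lt hdist (lt_add_of_pos_right R (lt_min (mul_pos hlam hη) one_pos))
    obtain ⟨z, hzY, hz⟩ :=
      (Metric.infDist_lt_iff (⟨0, Y.zero_mem⟩ : (Y : Set X).Nonempty)).mp hlt
    refine ⟨lam⁻¹ • (z - y), ⟨Y.smul_mem _ (Y.sub_mem hzY hy), ?_⟩, ?_⟩
    · rw [norm_smul]
      have hzy : ‖z - y‖ ≤ ‖z - x‖ + ‖x - y‖ := norm_sub_le_norm_sub_add_norm_sub _ _ _
      have h1 : ‖z - x‖ < R + 1 := by
        rw [norm_sub_rev]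
        calc ‖x - z‖ = dist x z := (dist_eq_norm _ _).symm
          _ < R + min (lam * η) 1 := hz
          _ ≤ R + 1 := by linarith [min_le_right (lam * η) (1:ℝ)]
      have h2 : ‖x - y‖ < R + 1 := lt_of_lt_of_le hxy (by linarith)
      have : ‖z - y‖ < lam := by
        rw [hlam_def]; linarith
      rw [Real.norm_eq_abs, abs_of_pos (inv_pos.mpr hlam)]
      rw [inv_mul_le_iff₀ hlam, mul_one]
      linarith
    · rw [dist_eq_norm, hx', ← smul_sub, norm_smul, Real.norm_eq_abs,
        abs_of_pos (inv_pos.mpr hlam)]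
      rw [show x - y - (z - y) = x - z by abel, ← dist_eq_norm]
      calc lam⁻¹ * dist x z < lam⁻¹ * (R + min (lam * η) 1) := by
            apply mul_lt_mul_of_pos_left hz (inv_pos.mpr hlam)
        _ ≤ lam⁻¹ * (R + lam * η) := by
            apply mul_le_mul_of_nonneg_left _ (le_of_lt (inv_pos.mpr hlam))
            have := min_le_left (lam * η) (1:ℝ); linarith
        _ = R / lam + η := by field_simp
  have h0mem : (0 : X) ∈ {z : X | z ∈ Y ∧ ‖z‖ ≤ 1} := ⟨Y.zero_mem, by simp⟩
  have hx'0 : ‖x' - 0‖ < R / lam + δ₀ := by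
    rw [sub_zero, hx', norm_smul, Real.norm_eq_abs, abs_of_pos (inv_pos.mpr hlam)]
    rw [inv_mul_lt_iff₀ hlam]
    have : lam * (R / lam + δ₀) = R + lam * δ₀ := by field_simp
    rw [this]
    calc ‖x - y‖ < R + min (lam * δ₀) 1 := hxy
      _ ≤ R + lam * δ₀ := by linarith [min_le_left (lam * δ₀) (1:ℝ)]
  obtain ⟨y₁, ⟨hy₁Y, hy₁n⟩, hy₁close, hy₁dist⟩ := H x' 0 hinf h0mem hx'0
  refine ⟨y + lam • y₁, Y.add_mem hy (Y.smul_mem _ hy₁Y), ?_, ?_⟩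
  · have : y - (y + lam • y₁) = -(lam • y₁) := by abel
    rw [this, norm_neg, norm_smul, Real.norm_eq_abs, abs_of_pos hlam]
    have h01 : ‖(0:X) - y₁‖ = ‖y₁‖ := by simp
    rw [h01] at hy₁close
    calc lam * ‖y₁‖ < lam * (ε / lam) := mul_lt_mul_of_pos_left hy₁close hlam
      _ = ε := by field_simp
  · have hxsplit : x - (y + lam • y₁) = lam • (x' - y₁) := by
      rw [hx', smul_sub, smul_inv_smul₀ (ne_of_gt hlam)]; abel
    rw [hxsplit, norm_smul, Real.norm_eq_abs, abs_of_pos hlam]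
    calc lam * ‖x' - y₁‖ ≤ lam * (R / lam) := mul_le_mul_of_nonneg_left hy₁dist hlam.le
      _ = R := by field_simp
end

section
/- Let X be a Banach space with the 3.2 intersection property. Then the closed unit ball B_X has the 1½-ball property in X: if B[x, r] ∩ B_X ≠ ∅ and ‖x − z‖ < r + s for some z ∈ B_X, then B[x, r] ∩ B[z, s] ∩ B_X ≠ ∅. -/
/-- If a real Banach space `X` has the 3.2 intersection property (any three
pairwise intersecting closed balls have a common point), then the closed unit ball
`B_X = B[0,1]` has the 1½-ball property in `X`. -/
theorem stmt_8 {X : Type*} [NormedAddCommGroup X] [NormedSpace ℝ X] [CompleteSpace X]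
    (h32IP : ∀ (c₁ c₂ c₃ : X) (r₁ r₂ r₃ : ℝ),
      (Metric.closedBall c₁ r₁ ∩ Metric.closedBall c₂ r₂).Nonempty →
      (Metric.closedBall c₁ r₁ ∩ Metric.closedBall c₃ r₃).Nonempty →
      (Metric.closedBall c₂ r₂ ∩ Metric.closedBall c₃ r₃).Nonempty →
      (Metric.closedBall c₁ r₁ ∩ Metric.closedBall c₂ r₂ ∩ Metric.closedBall c₃ r₃).Nonempty) :
    ∀ (x z : X) (r s : ℝ), 0 < r → 0 < s → z ∈ Metric.closedBall (0 : X) 1 →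
      (Metric.closedBall x r ∩ Metric.closedBall (0 : X) 1).Nonempty → ‖x - z‖ < r + s →
      (Metric.closedBall x r ∩ Metric.closedBall z s ∩ Metric.closedBall (0 : X) 1).Nonempty := by
  intro x z r s hr hs hz h1 hxz
  apply h32IP
  · -- B[x,r] ∩ B[z,s] nonempty: midpoint-type point
    refine ⟨x + (r/(r+s)) • (z - x), ?_, ?_⟩
    · simp only [Metric.mem_closedBall, dist_eq_norm]
      have : x + (r/(r+s)) • (z - x) - x = (r/(r+s)) • (z - x) := by abel
      rw [this, norm_smul]
      have hrs : 0 < r + s := by linarith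
      have : ‖(r/(r+s))‖ = r/(r+s) := by
        rw [Real.norm_eq_abs, abs_of_pos (by positivity)]
      rw [this]
      rw [div_mul_eq_mul_div, div_le_iff₀ hrs]
      have : ‖z - x‖ = ‖x - z‖ := by rw [← norm_neg]; congr 1; abel
      rw [this]
      nlinarith
    · simp only [Metric.mem_closedBall, dist_eq_norm]
      have hrs : 0 < r + s := by linarith
      have : x + (r/(r+s)) • (z - x) - z = (r/(r+s) - 1) • (z - x) := by
        rw [sub_smul, one_smul]; module
      rw [this, norm_smul, Real.norm_eq_abs]
      have h1' : r/(r+s) - 1 = -(s/(r+s)) := by field_simp; ring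
      rw [h1', abs_neg, abs_of_pos (by positivity)]
      rw [div_mul_eq_mul_div, div_le_iff₀ hrs]
      have : ‖z - x‖ = ‖x - z‖ := by rw [← norm_neg]; congr 1; abel
      rw [this]
      nlinarith
  · exact h1
  · exact ⟨z, Metric.mem_closedBall_self hs.le, hz⟩
end

section
/- Let Y be a closed subspace of a Banach space X. If the closed unit ball B_Y has the 1½-ball property in X, then the subspace Y has the 1½-ball property in X. -/
/-!
The 1½-ball property is invariant under homotheties `z ↦ c • z`, and it is local: a set has it
as soon as any two of its points lie in a subset that has it. Two points `y, w` of `Y` lie in the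
ball `λ • B_Y` with `λ = max ‖y‖ ‖w‖ 1`, which has the property because `B_Y` does.
-/

open Metric Set
open scoped Pointwise

section OneAndAHalfBall

variable {E : Type*} [SeminormedAddCommGroup E]

def HasOneAndAHalfBallProperty (S : Set E) : Prop :=
  ∀ (x y : E) (r₁ r₂ : ℝ), 0 < r₁ → 0 < r₂ → y ∈ S → (closedBall x r₁ ∩ S).Nonempty →
    ‖x - y‖ < r₁ + r₂ → (closedBall x r₁ ∩ closedBall y r₂ ∩ S).Nonempty

theorem HasOneAndAHalfBallProperty.of_forall_exists_subset {T : Set E}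
    (h : ∀ a ∈ T, ∀ b ∈ T, ∃ S ⊆ T, a ∈ S ∧ b ∈ S ∧ HasOneAndAHalfBallProperty S) :
    HasOneAndAHalfBallProperty T := by
  rintro x y r₁ r₂ hr₁ hr₂ hyT ⟨w, hwx, hwT⟩ hxy
  obtain ⟨S, hST, hyS, hwS, hS⟩ := h y hyT w hwT
  obtain ⟨z, hz, hzS⟩ := hS x y r₁ r₂ hr₁ hr₂ hyS ⟨w, hwx, hwS⟩ hxy
  exact ⟨z, hz, hST hzS⟩

variable {𝕜 : Type*} [NormedField 𝕜] [NormedSpace 𝕜 E]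

theorem mem_closedBall_inv_smul_iff {c : 𝕜} (hc : c ≠ 0) {z x : E} {r : ℝ} :
    z ∈ closedBall (c⁻¹ • x) (r / ‖c‖) ↔ c • z ∈ closedBall x r := by
  rw [← mem_inv_smul_set_iff₀ hc, smul_closedBall' (inv_ne_zero hc), norm_inv, inv_mul_eq_div]

theorem HasOneAndAHalfBallProperty.smul {S : Set E} (hS : HasOneAndAHalfBallProperty S)
    {c : 𝕜} (hc : c ≠ 0) : HasOneAndAHalfBallProperty (c • S) := by
  intro x y r₁ r₂ hr₁ hr₂ hy hne hxy
  have hc' : 0 < ‖c‖ := norm_pos_iff.2 hc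
  have hne' : (closedBall (c⁻¹ • x) (r₁ / ‖c‖) ∩ S).Nonempty := by
    obtain ⟨w, hwx, hwS⟩ := hne
    refine ⟨c⁻¹ • w, ?_, (mem_smul_set_iff_inv_smul_mem₀ hc _ _).1 hwS⟩
    rwa [mem_closedBall_inv_smul_iff hc, smul_inv_smul₀ hc]
  have hxy' : ‖c⁻¹ • x - c⁻¹ • y‖ < r₁ / ‖c‖ + r₂ / ‖c‖ := by
    rwa [← smul_sub, norm_smul, norm_inv, inv_mul_eq_div, ← add_div,
      div_lt_div_iff_of_pos_right hc']
  obtain ⟨z, ⟨hzx, hzy⟩, hzS⟩ := hS _ _ _ _ (div_pos hr₁ hc') (div_pos hr₂ hc')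
    ((mem_smul_set_iff_inv_smul_mem₀ hc _ _).1 hy) hne' hxy'
  exact ⟨c • z, ⟨(mem_closedBall_inv_smul_iff hc).1 hzx, (mem_closedBall_inv_smul_iff hc).1 hzy⟩,
    smul_mem_smul_set hzS⟩

end OneAndAHalfBall

theorem Submodule.mem_smul_unitBall {X : Type*} [SeminormedAddCommGroup X] [NormedSpace ℝ X]
    (Y : Submodule ℝ X) {r : ℝ} (hr : 0 < r) {z : X} (hz : z ∈ Y) (hzr : ‖z‖ ≤ r) :
    z ∈ r • {z : X | z ∈ Y ∧ ‖z‖ ≤ 1} := by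
  refine (mem_smul_set_iff_inv_smul_mem₀ hr.ne' _ _).2 ⟨Y.smul_mem _ hz, ?_⟩
  rwa [norm_smul, norm_inv, Real.norm_of_nonneg hr.le, inv_mul_le_one₀ hr]

theorem stmt_9_general {X : Type*} [NormedAddCommGroup X] [NormedSpace ℝ X]
    (Y : Subspace ℝ X)
    (hBball : ∀ (x y : X) (r₁ r₂ : ℝ), 0 < r₁ → 0 < r₂ →
      y ∈ {z : X | z ∈ Y ∧ ‖z‖ ≤ 1} →
      (Metric.closedBall x r₁ ∩ {z : X | z ∈ Y ∧ ‖z‖ ≤ 1}).Nonempty →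
      ‖x - y‖ < r₁ + r₂ →
      (Metric.closedBall x r₁ ∩ Metric.closedBall y r₂ ∩ {z : X | z ∈ Y ∧ ‖z‖ ≤ 1}).Nonempty) :
    ∀ (x y : X) (r₁ r₂ : ℝ), 0 < r₁ → 0 < r₂ → y ∈ Y →
      (Metric.closedBall x r₁ ∩ (Y : Set X)).Nonempty → ‖x - y‖ < r₁ + r₂ →
      (Metric.closedBall x r₁ ∩ Metric.closedBall y r₂ ∩ (Y : Set X)).Nonempty := by
  have hB : HasOneAndAHalfBallProperty {z : X | z ∈ Y ∧ ‖z‖ ≤ 1} := hBball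
  refine HasOneAndAHalfBallProperty.of_forall_exists_subset fun y hy w hw => ?_
  set r : ℝ := max (max ‖y‖ ‖w‖) 1
  have hr : 0 < r := zero_lt_one.trans_le (le_max_right _ _)
  refine ⟨r • {z : X | z ∈ Y ∧ ‖z‖ ≤ 1}, ?_, Y.mem_smul_unitBall hr hy ?_,
    Y.mem_smul_unitBall hr hw ?_, hB.smul hr.ne'⟩
  · rintro _ ⟨z, ⟨hz, -⟩, rfl⟩
    exact Y.smul_mem r hz
  · exact (le_max_left _ _).trans (le_max_left _ _)
  · exact (le_max_right _ _).trans (le_max_left _ _)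

/-- If the closed unit ball `B_Y` of a closed subspace `Y` of a Banach
space `X` has the 1½-ball property in `X`, then `Y` has the 1½-ball property in `X`. -/
theorem stmt_9 {X : Type*} [NormedAddCommGroup X] [NormedSpace ℝ X] [CompleteSpace X]
    (Y : Subspace ℝ X) (hYcl : IsClosed (Y : Set X))
    (hBball : ∀ (x y : X) (r₁ r₂ : ℝ), 0 < r₁ → 0 < r₂ →
      y ∈ {z : X | z ∈ Y ∧ ‖z‖ ≤ 1} →
      (Metric.closedBall x r₁ ∩ {z : X | z ∈ Y ∧ ‖z‖ ≤ 1}).Nonempty →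
      ‖x - y‖ < r₁ + r₂ →
      (Metric.closedBall x r₁ ∩ Metric.closedBall y r₂ ∩ {z : X | z ∈ Y ∧ ‖z‖ ≤ 1}).Nonempty) :
    ∀ (x y : X) (r₁ r₂ : ℝ), 0 < r₁ → 0 < r₂ → y ∈ Y →
      (Metric.closedBall x r₁ ∩ (Y : Set X)).Nonempty → ‖x - y‖ < r₁ + r₂ →
      (Metric.closedBall x r₁ ∩ Metric.closedBall y r₂ ∩ (Y : Set X)).Nonempty :=
  stmt_9_general Y hBball
end

section
/- Let Y be a closed subspace of a Banach space X. If the closed unit ball B_Y has the 1½-ball property in X, then B_Y is proximinal in X, i.e., for every x ∈ X there is y ∈ B_Y with ‖x − y‖ = d(x, B_Y). -/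
/-- If the closed unit ball `B_Y` of a closed subspace `Y` of a Banach
space `X` has the 1½-ball property in `X`, then `B_Y` is proximinal in `X`. -/
theorem stmt_10 {X : Type*} [NormedAddCommGroup X] [NormedSpace ℝ X] [CompleteSpace X]
    (Y : Subspace ℝ X) (hYcl : IsClosed (Y : Set X))
    (hBball : ∀ (x y : X) (r₁ r₂ : ℝ), 0 < r₁ → 0 < r₂ →
      y ∈ {z : X | z ∈ Y ∧ ‖z‖ ≤ 1} →
      (Metric.closedBall x r₁ ∩ {z : X | z ∈ Y ∧ ‖z‖ ≤ 1}).Nonempty →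
      ‖x - y‖ < r₁ + r₂ →
      (Metric.closedBall x r₁ ∩ Metric.closedBall y r₂ ∩ {z : X | z ∈ Y ∧ ‖z‖ ≤ 1}).Nonempty) :
    ∀ x : X, ∃ y ∈ {z : X | z ∈ Y ∧ ‖z‖ ≤ 1},
      ‖x - y‖ = Metric.infDist x {z : X | z ∈ Y ∧ ‖z‖ ≤ 1} := by
  intro x
  set S : Set X := {z : X | z ∈ Y ∧ ‖z‖ ≤ 1} with hSdef
  have hS0 : (0:X) ∈ S := ⟨Y.zero_mem, by simp⟩
  have hSne : S.Nonempty := ⟨0, hS0⟩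
  have hScl : IsClosed S := by
    have : S = (Y : Set X) ∩ Metric.closedBall 0 1 := by
      ext z; simp [hSdef, mem_closedBall_zero_iff]
    rw [this]; exact hYcl.inter Metric.isClosed_closedBall
  set d := Metric.infDist x S with hd
  have hd0 : 0 ≤ d := Metric.infDist_nonneg
  have exists_close : ∀ r : ℝ, d < r → ∃ z ∈ S, ‖x - z‖ < r := by
    intro r hr
    obtain ⟨z, hzS, hz⟩ := (Metric.infDist_lt_iff hSne).1 hr
    exact ⟨z, hzS, by rwa [← dist_eq_norm]⟩
  have step : ∀ n : ℕ, ∀ y : X, y ∈ S → ‖x - y‖ ≤ d + (1/2)^n →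
      ∃ y', (y' ∈ S ∧ ‖x - y'‖ ≤ d + (1/2)^(n+1)) ∧ ‖y' - y‖ ≤ (1/2)^n := by
    intro n y hyS hy
    have hp1 : (0:ℝ) < (1/2:ℝ)^(n+1) := by positivity
    have hp0 : (0:ℝ) < (1/2:ℝ)^n := by positivity
    have hr1 : (0:ℝ) < d + (1/2)^(n+1) := by linarith
    obtain ⟨z, hzS, hz⟩ := exists_close (d + (1/2)^(n+1)) (by linarith)
    have hne : (Metric.closedBall x (d + (1/2)^(n+1)) ∩ S).Nonempty :=
      ⟨z, by rw [Metric.mem_closedBall, dist_comm, dist_eq_norm]; exact hz.le, hzS⟩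
    have hlt : ‖x - y‖ < (d + (1/2)^(n+1)) + (1/2)^n := by linarith
    obtain ⟨w, ⟨hw1, hw2⟩, hwS⟩ := hBball x y _ _ hr1 hp0 hyS hne hlt
    refine ⟨w, ⟨hwS, ?_⟩, ?_⟩
    · rw [Metric.mem_closedBall, dist_comm, dist_eq_norm] at hw1; exact hw1
    · rw [Metric.mem_closedBall, dist_eq_norm] at hw2; exact hw2
  choose! F hF using step
  obtain ⟨y0, hy0S, hy0⟩ := exists_close (d + 1) (by linarith)
  set f : ℕ → X := fun n => Nat.rec y0 (fun n y => F n y) n with hf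
  have hfs : ∀ n, f (n+1) = F n (f n) := fun n => rfl
  have inv : ∀ n, f n ∈ S ∧ ‖x - f n‖ ≤ d + (1/2)^n := by
    intro n; induction n with
    | zero => exact ⟨hy0S, by rw [pow_zero]; exact hy0.le⟩
    | succ n ih =>
      obtain ⟨⟨h1, h2⟩, _⟩ := hF n (f n) ih.1 ih.2
      rw [hfs]; exact ⟨h1, h2⟩
  have hdist : ∀ n, dist (f n) (f (n+1)) ≤ 1 * (1/2)^n := by
    intro n
    have h := (hF n (f n) (inv n).1 (inv n).2).2
    rw [← hfs] at h
    rw [one_mul, dist_eq_norm, ← norm_neg]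
    simpa [neg_sub] using h
  have hcauchy : CauchySeq f := cauchySeq_of_le_geometric (1/2) 1 (by norm_num) hdist
  obtain ⟨y, hy⟩ := cauchySeq_tendsto_of_complete hcauchy
  have hyS : y ∈ S := hScl.mem_of_tendsto hy (Filter.Eventually.of_forall fun n => (inv n).1)
  refine ⟨y, hyS, le_antisymm ?_ ?_⟩
  · have h1 : Filter.Tendsto (fun n => ‖x - f n‖) Filter.atTop (nhds ‖x - y‖) :=
      (tendsto_const_nhds.sub hy).norm
    have h2 : Filter.Tendsto (fun n : ℕ => d + (1/2:ℝ)^n) Filter.atTop (nhds d) := by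
      have := tendsto_pow_atTop_nhds_zero_of_lt_one (by norm_num : (0:ℝ) ≤ 1/2)
        (by norm_num : (1/2:ℝ) < 1)
      simpa using tendsto_const_nhds.add this
    exact le_of_tendsto_of_tendsto h1 h2 (Filter.Eventually.of_forall fun n => (inv n).2)
  · calc d ≤ dist x y := Metric.infDist_le_dist_of_mem hyS
    _ = ‖x - y‖ := dist_eq_norm x y
end

section
/- Let Y be a closed subspace of a Banach space X. The following are equivalent: (a) B_Y has the 1½-ball property in X; (b) for all x ∈ X and y ∈ B_Y, d(y, P_{B_Y}(x)) = ‖y − x‖ − d(x, B_Y). -/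
/-!
If `P` is the set of nearest points of `B` to `x` and `d = d(x, B)`, then `d(y, P) ≥ ‖y − x‖ − d`
always holds by the triangle inequality. The 1½-ball property, applied with radii `d` and
`‖x − y‖ − d + ε`, produces nearest points `z` with `‖y − z‖ ≤ ‖y − x‖ − d + ε`, which is the
reverse inequality. Conversely, given the distance formula, pick a nearest point `z` with
`‖y − z‖ < r₁ + r₂ − d`; if it is not already within `r₂` of `y`, the point of the segment `[y, z]`
at distance `r₂` from `y` lies in the convex set `B` and within `r₁` of `x`.
-/

open Set Metric AffineMap

section PseudoMetric

variable {α : Type*} [PseudoMetricSpace α]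

/-- The metric projection `P_B(x)` of `x` onto `B`. -/
def nearestPoints (B : Set α) (x : α) : Set α :=
  {z | z ∈ B ∧ dist x z = infDist x B}

def HasOneAndHalfBallProperty (B : Set α) : Prop :=
  ∀ (x y : α) (r₁ r₂ : ℝ), 0 < r₁ → 0 < r₂ → y ∈ B → (closedBall x r₁ ∩ B).Nonempty →
    dist x y < r₁ + r₂ → (closedBall x r₁ ∩ closedBall y r₂ ∩ B).Nonempty

variable {B : Set α} {x y : α}

theorem sub_infDist_le_infDist_nearestPoints (hP : (nearestPoints B x).Nonempty) :
    dist y x - infDist x B ≤ infDist y (nearestPoints B x) := by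
  refine (le_infDist hP).2 fun z hz => ?_
  have := dist_triangle y z x
  rw [dist_comm z x, hz.2] at this
  linarith

theorem infDist_nearestPoints_le_of_hasOneAndHalfBallProperty (hB : HasOneAndHalfBallProperty B)
    (hy : y ∈ B) (hP : (nearestPoints B x).Nonempty) :
    infDist y (nearestPoints B x) ≤ dist y x - infDist x B := by
  obtain ⟨z₀, hz₀B, hz₀⟩ := hP
  rcases (infDist_nonneg : 0 ≤ infDist x B).eq_or_lt with hd | hd
  · calc infDist y (nearestPoints B x) ≤ dist y z₀ := infDist_le_dist_of_mem ⟨hz₀B, hz₀⟩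
      _ ≤ dist y x + dist x z₀ := dist_triangle _ _ _
      _ = dist y x - infDist x B := by rw [hz₀, ← hd]; ring
  refine le_of_forall_pos_le_add fun ε hε => ?_
  have hdy : infDist x B ≤ dist x y := infDist_le_dist_of_mem hy
  obtain ⟨z, ⟨hzx, hzy⟩, hzB⟩ := hB x y _ (dist x y - infDist x B + ε) hd (by linarith) hy
    ⟨z₀, by rw [mem_closedBall, dist_comm, hz₀], hz₀B⟩ (by linarith)
  have hzP : z ∈ nearestPoints B x :=
    ⟨hzB, le_antisymm (by rwa [dist_comm]) (infDist_le_dist_of_mem hzB)⟩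
  calc infDist y (nearestPoints B x) ≤ dist y z := infDist_le_dist_of_mem hzP
    _ ≤ dist y x - infDist x B + ε := by
      rw [dist_comm y z, dist_comm y x]; linarith [mem_closedBall.1 hzy]

end PseudoMetric

section Normed

variable {E : Type*} [NormedAddCommGroup E] [NormedSpace ℝ E]

theorem exists_dist_lineMap_eq {y z : E} {r : ℝ} (hr : 0 ≤ r) (hrz : r ≤ dist y z) :
    ∃ c ∈ Icc (0 : ℝ) 1,
      dist (lineMap y z c) y = r ∧ dist (lineMap y z c) z = dist y z - r := by
  rcases (dist_nonneg : 0 ≤ dist y z).eq_or_lt with h | h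
  · exact ⟨0, left_mem_Icc.2 zero_le_one, by simp; linarith, by simp [← h]; linarith⟩
  refine ⟨r / dist y z, ⟨div_nonneg hr h.le, (div_le_one h).2 hrz⟩, ?_, ?_⟩
  · rw [dist_lineMap_left, Real.norm_of_nonneg (div_nonneg hr h.le), div_mul_cancel₀ _ h.ne']
  · rw [dist_lineMap_right, Real.norm_of_nonneg (sub_nonneg.2 ((div_le_one h).2 hrz)),
      sub_mul, div_mul_cancel₀ _ h.ne', one_mul]

theorem Convex.hasOneAndHalfBallProperty {B : Set E} (hB : Convex ℝ B)
    (hP : ∀ x, (nearestPoints B x).Nonempty)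
    (h : ∀ x, ∀ y ∈ B, infDist y (nearestPoints B x) ≤ dist y x - infDist x B) :
    HasOneAndHalfBallProperty B := by
  intro x y r₁ r₂ hr₁ hr₂ hy ⟨w, hwx, hwB⟩ hxy
  have hdr₁ : infDist x B ≤ r₁ :=
    (infDist_le_dist_of_mem hwB).trans (by rwa [dist_comm, ← mem_closedBall])
  obtain ⟨z, ⟨hzB, hxz⟩, hyz⟩ := (infDist_lt_iff (hP x)).1 <|
    (h x y hy).trans_lt (show dist y x - infDist x B < r₁ + r₂ - infDist x B by
      rw [dist_comm]; linarith)
  rcases le_or_gt (dist y z) r₂ with hyz₂ | hyz₂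
  · exact ⟨z, ⟨by rw [mem_closedBall, dist_comm, hxz]; exact hdr₁,
      by rwa [mem_closedBall, dist_comm]⟩, hzB⟩
  obtain ⟨c, hc, hcy, hcz⟩ := exists_dist_lineMap_eq hr₂.le hyz₂.le
  refine ⟨lineMap y z c, ⟨?_, hcy.le⟩, hB.lineMap_mem hy hzB hc⟩
  rw [mem_closedBall]
  calc dist (lineMap y z c) x ≤ dist (lineMap y z c) z + dist z x := dist_triangle _ _ _
    _ ≤ r₁ := by rw [hcz, dist_comm z x, hxz]; linarith

theorem Convex.hasOneAndHalfBallProperty_iff {B : Set E} (hB : Convex ℝ B)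
    (hP : ∀ x, (nearestPoints B x).Nonempty) :
    HasOneAndHalfBallProperty B ↔
      ∀ x, ∀ y ∈ B, infDist y (nearestPoints B x) = dist y x - infDist x B :=
  ⟨fun h x _ hy => le_antisymm (infDist_nearestPoints_le_of_hasOneAndHalfBallProperty h hy (hP x))
      (sub_infDist_le_infDist_nearestPoints (hP x)),
    fun h => hB.hasOneAndHalfBallProperty hP fun x y hy => (h x y hy).le⟩

end Normed

theorem stmt_11_general {X : Type*} [NormedAddCommGroup X] [NormedSpace ℝ X]
    (Y : Subspace ℝ X)
    (hprox : ∀ x : X, {z : X | (z ∈ Y ∧ ‖z‖ ≤ 1) ∧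
      ‖x - z‖ = Metric.infDist x {w : X | w ∈ Y ∧ ‖w‖ ≤ 1}}.Nonempty) :
    (∀ (x y : X) (r₁ r₂ : ℝ), 0 < r₁ → 0 < r₂ →
      y ∈ {z : X | z ∈ Y ∧ ‖z‖ ≤ 1} →
      (Metric.closedBall x r₁ ∩ {z : X | z ∈ Y ∧ ‖z‖ ≤ 1}).Nonempty →
      ‖x - y‖ < r₁ + r₂ →
      (Metric.closedBall x r₁ ∩ Metric.closedBall y r₂ ∩ {z : X | z ∈ Y ∧ ‖z‖ ≤ 1}).Nonempty)
    ↔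
    (∀ x y : X, y ∈ Y → ‖y‖ ≤ 1 →
      Metric.infDist y {z : X | (z ∈ Y ∧ ‖z‖ ≤ 1) ∧
        ‖x - z‖ = Metric.infDist x {w : X | w ∈ Y ∧ ‖w‖ ≤ 1}} =
      ‖y - x‖ - Metric.infDist x {w : X | w ∈ Y ∧ ‖w‖ ≤ 1}) := by
  have hconv : Convex ℝ {z : X | z ∈ Y ∧ ‖z‖ ≤ 1} := by
    have hB : {z : X | z ∈ Y ∧ ‖z‖ ≤ 1} = (Y : Set X) ∩ closedBall 0 1 := by ext; simp
    exact hB ▸ Y.convex.inter (convex_closedBall 0 1)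
  have hP : ∀ x, (nearestPoints {z : X | z ∈ Y ∧ ‖z‖ ≤ 1} x).Nonempty := by
    simpa only [nearestPoints, dist_eq_norm, mem_ofPred_eq] using hprox
  simpa only [HasOneAndHalfBallProperty, nearestPoints, dist_eq_norm, mem_ofPred_eq, and_imp]
    using hconv.hasOneAndHalfBallProperty_iff hP

/-- For a closed subspace `Y` of a Banach space `X` with `B_Y` proximinal,
the following are equivalent: (a) `B_Y` has the 1½-ball property in `X`; (b) for all
`x ∈ X` and `y ∈ B_Y`, `d(y, P_{B_Y}(x)) = ‖y − x‖ − d(x, B_Y)`. -/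
theorem stmt_11 {X : Type*} [NormedAddCommGroup X] [NormedSpace ℝ X] [CompleteSpace X]
    (Y : Subspace ℝ X) (hYcl : IsClosed (Y : Set X))
    (hprox : ∀ x : X, {z : X | (z ∈ Y ∧ ‖z‖ ≤ 1) ∧
      ‖x - z‖ = Metric.infDist x {w : X | w ∈ Y ∧ ‖w‖ ≤ 1}}.Nonempty) :
    (∀ (x y : X) (r₁ r₂ : ℝ), 0 < r₁ → 0 < r₂ →
      y ∈ {z : X | z ∈ Y ∧ ‖z‖ ≤ 1} →
      (Metric.closedBall x r₁ ∩ {z : X | z ∈ Y ∧ ‖z‖ ≤ 1}).Nonempty →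
      ‖x - y‖ < r₁ + r₂ →
      (Metric.closedBall x r₁ ∩ Metric.closedBall y r₂ ∩ {z : X | z ∈ Y ∧ ‖z‖ ≤ 1}).Nonempty)
    ↔
    (∀ x y : X, y ∈ Y → ‖y‖ ≤ 1 →
      Metric.infDist y {z : X | (z ∈ Y ∧ ‖z‖ ≤ 1) ∧
        ‖x - z‖ = Metric.infDist x {w : X | w ∈ Y ∧ ‖w‖ ≤ 1}} =
      ‖y - x‖ - Metric.infDist x {w : X | w ∈ Y ∧ ‖w‖ ≤ 1}) :=
  stmt_11_general Y hprox
end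

section
/- Let X = ℝ² with the Euclidean norm and Z = X ⊕_∞ ℝ (max norm on the pair). For x = ((1,1), 0) ∈ Z one has d(x, B_X) = √2 − 1 where B_X is the unit ball of X viewed inside Z, and there exists y ∈ B_Z (namely y = ((1/√2, 1/√2), 1)) such that ‖x − y‖ < d(x, B_X) + d(y, P_{B_X}(x)). Consequently B_X does not have the 1½-ball property in Z. -/
open Metric

private lemma norm_e2 (w : EuclideanSpace ℝ (Fin 2)) :
    ‖w‖ = Real.sqrt ((w 0)^2 + (w 1)^2) := by
  rw [EuclideanSpace.norm_eq]
  simp [Fin.sum_univ_two, Real.norm_eq_abs, sq_abs]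

private lemma sqrt_le_of_sqrt_le {t : ℝ} (ht : 0 ≤ t) (h : Real.sqrt t ≤ 1) : t ≤ 1 := by
  nlinarith [Real.sq_sqrt ht, Real.sqrt_nonneg t]

private lemma sqrt5_facts : Real.sqrt 5 < 23/10 ∧ (1:ℝ) ≤ Real.sqrt 5 := by
  constructor
  · nlinarith [Real.sq_sqrt (show (0:ℝ) ≤ 5 by norm_num), Real.sqrt_nonneg 5]
  · nlinarith [Real.sq_sqrt (show (0:ℝ) ≤ 5 by norm_num), Real.sqrt_nonneg 5]

private lemma sqrt2_facts :
    (Real.sqrt 2)^2 = 2 ∧ 1 < Real.sqrt 2 ∧ Real.sqrt 2 < 3/2 ∧ 13/10 < Real.sqrt 2 := by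
  refine ⟨Real.sq_sqrt (by norm_num), ?_, ?_, ?_⟩ <;>
  nlinarith [Real.sq_sqrt (show (0:ℝ) ≤ 2 by norm_num), Real.sqrt_nonneg 2]

/-- Let `Z = ℝ² ⊕_∞ ℝ` (product with the max norm; in Mathlib the product
norm on `EuclideanSpace ℝ (Fin 2) × ℝ` is the max norm) and let
`B_X = {(v,0) : ‖v‖₂ ≤ 1} ⊆ Z`. For `x = ((1,1),0)` one has `d(x, B_X) = √2 − 1`, and
`y = ((1/√2, 1/√2), 1) ∈ B_Z` satisfies `‖x − y‖ < d(x, B_X) + d(y, P_{B_X}(x))`.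
Consequently `B_X` does not have the 1½-ball property in `Z`. -/
theorem stmt_13 :
    ∀ BX : Set (EuclideanSpace ℝ (Fin 2) × ℝ),
      BX = {p : EuclideanSpace ℝ (Fin 2) × ℝ | ‖p.1‖ ≤ 1 ∧ p.2 = 0} →
    ∀ x : EuclideanSpace ℝ (Fin 2) × ℝ,
      x = ((WithLp.equiv 2 (Fin 2 → ℝ)).symm ![1, 1], (0 : ℝ)) →
    Metric.infDist x BX = Real.sqrt 2 - 1 ∧
    (∃ y : EuclideanSpace ℝ (Fin 2) × ℝ,
      y = ((WithLp.equiv 2 (Fin 2 → ℝ)).symm ![1 / Real.sqrt 2, 1 / Real.sqrt 2], (1 : ℝ)) ∧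
      ‖y‖ ≤ 1 ∧
      ‖x - y‖ < Metric.infDist x BX +
        Metric.infDist y {z ∈ BX | ‖x - z‖ = Metric.infDist x BX}) ∧
    ¬ (∀ (a b : EuclideanSpace ℝ (Fin 2) × ℝ) (r₁ r₂ : ℝ), 0 < r₁ → 0 < r₂ → b ∈ BX →
        (Metric.closedBall a r₁ ∩ BX).Nonempty → ‖a - b‖ < r₁ + r₂ →
        (Metric.closedBall a r₁ ∩ Metric.closedBall b r₂ ∩ BX).Nonempty) := by
  intro BX hBX x hx
  obtain ⟨hr2, hr1, hr3, hr4⟩ := sqrt2_facts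
  set r := Real.sqrt 2 with hr
  have hrpos : 0 < r := by linarith
  -- the nearest point
  set v0 : EuclideanSpace ℝ (Fin 2) := (WithLp.equiv 2 (Fin 2 → ℝ)).symm ![1/r, 1/r] with hv0
  have hv00 : v0 0 = 1/r := by simp [hv0]
  have hv01 : v0 1 = 1/r := by simp [hv0]
  have hx1_0 : x.1 0 = 1 := by simp [hx]
  have hx1_1 : x.1 1 = 1 := by simp [hx]
  have hx2 : x.2 = 0 := by simp [hx]
  have hnv0 : ‖v0‖ = 1 := by
    rw [norm_e2, hv00, hv01]
    rw [show (1/r)^2 + (1/r)^2 = 1 by field_simp; linarith]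
    exact Real.sqrt_one
  have hnx1 : ‖x.1‖ = r := by
    rw [norm_e2, hx1_0, hx1_1]
    rw [show (1:ℝ)^2 + 1^2 = 2 by norm_num]
  have hnxv0 : ‖x.1 - v0‖ = r - 1 := by
    rw [norm_e2]
    simp only [PiLp.sub_apply, hx1_0, hx1_1, hv00, hv01]
    rw [show (1 - 1/r)^2 + (1 - 1/r)^2 = (r-1)^2 by field_simp; ring_nf; nlinarith]
    exact Real.sqrt_sq (by linarith)
  set z0 : EuclideanSpace ℝ (Fin 2) × ℝ := (v0, 0) with hz0
  have hz0mem : z0 ∈ BX := by rw [hBX]; exact ⟨le_of_eq hnv0, rfl⟩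
  have hdxz0 : dist x z0 = r - 1 := by
    rw [Prod.dist_eq]
    rw [dist_eq_norm, dist_eq_norm, hnxv0, hx2]
    simp only [hz0]
    rw [show ((0:ℝ) - 0) = 0 by ring, norm_zero]
    exact max_eq_left (by linarith)
  -- lower bound for infDist
  have hlow : ∀ z ∈ BX, r - 1 ≤ dist x z := by
    intro z hz
    rw [hBX] at hz
    obtain ⟨hz1, _⟩ := hz
    calc r - 1 ≤ ‖x.1‖ - ‖z.1‖ := by rw [hnx1]; linarith
    _ ≤ ‖x.1 - z.1‖ := norm_sub_norm_le _ _
    _ = dist x.1 z.1 := (dist_eq_norm _ _).symm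
    _ ≤ dist x z := le_max_left _ _
  have hinf : Metric.infDist x BX = r - 1 := by
    refine le_antisymm ?_ ?_
    · calc Metric.infDist x BX ≤ dist x z0 := Metric.infDist_le_dist_of_mem hz0mem
      _ = r - 1 := hdxz0
    · by_contra h
      push_neg at h
      obtain ⟨z, hz, hzd⟩ := (Metric.infDist_lt_iff ⟨z0, hz0mem⟩).mp h
      exact absurd (hlow z hz) (not_le.mpr hzd)
  refine ⟨hinf, ?_, ?_⟩
  · -- part 2
    set y : EuclideanSpace ℝ (Fin 2) × ℝ := (v0, 1) with hy
    refine ⟨y, rfl, ?_, ?_⟩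
    · rw [Prod.norm_def]
      simp only [hy, hnv0, norm_one]
      norm_num
    · -- ‖x - y‖ = 1
      have hxy : ‖x - y‖ = 1 := by
        rw [Prod.norm_def]
        simp only [Prod.fst_sub, Prod.snd_sub, hy, hnxv0, hx2]
        rw [show ((0:ℝ) - 1) = -1 by ring]
        rw [norm_neg, norm_one]
        exact max_eq_right (by linarith)
      set P := {z ∈ BX | ‖x - z‖ = Metric.infDist x BX} with hP
      have hz0P : z0 ∈ P := by
        refine ⟨hz0mem, ?_⟩
        rw [hinf, ← hdxz0, dist_eq_norm]
      have hPy : 1 ≤ Metric.infDist y P := by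
        by_contra h
        push_neg at h
        obtain ⟨z, hz, hzd⟩ := (Metric.infDist_lt_iff ⟨z0, hz0P⟩).mp h
        have hz2 : z.2 = 0 := by
          have := hz.1; rw [hBX] at this; exact this.2
        have : (1:ℝ) ≤ dist y z := by
          calc (1:ℝ) = dist (y.2) (z.2) := by
                rw [hz2]; simp [hy, Real.dist_eq]
          _ ≤ dist y z := le_max_right _ _
        linarith
      rw [hxy, hinf]
      linarith
  · -- part 3: counterexample to the 1½-ball property
    intro H
    set a : EuclideanSpace ℝ (Fin 2) × ℝ := ((WithLp.equiv 2 (Fin 2 → ℝ)).symm ![2, 0], 1) with ha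
    set b : EuclideanSpace ℝ (Fin 2) × ℝ := ((WithLp.equiv 2 (Fin 2 → ℝ)).symm ![0, 1], 0) with hb
    set w : EuclideanSpace ℝ (Fin 2) × ℝ := ((WithLp.equiv 2 (Fin 2 → ℝ)).symm ![1, 0], 0) with hw
    have ha0 : a.1 0 = 2 := by simp [ha]
    have ha1 : a.1 1 = 0 := by simp [ha]
    have hbmem : b ∈ BX := by
      rw [hBX]
      refine ⟨?_, rfl⟩
      rw [norm_e2]
      simp [hb]
    have hwmem : w ∈ BX := by
      rw [hBX]
      refine ⟨?_, rfl⟩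
      rw [norm_e2]
      simp [hw]
    have hwball : w ∈ Metric.closedBall a 1 := by
      rw [Metric.mem_closedBall, Prod.dist_eq, dist_eq_norm, dist_eq_norm, norm_e2]
      simp only [hw, ha, PiLp.sub_apply, WithLp.equiv_symm_apply, PiLp.toLp_apply,
        Matrix.cons_val_zero, Matrix.cons_val_one, Matrix.head_cons]
      norm_num [Real.sqrt_one]
    obtain ⟨h5, h5'⟩ := sqrt5_facts
    have hab : ‖a - b‖ < 1 + 13/10 := by
      rw [Prod.norm_def]
      simp only [Prod.fst_sub, Prod.snd_sub]
      rw [norm_e2]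
      simp only [ha, hb, PiLp.sub_apply, WithLp.equiv_symm_apply, PiLp.toLp_apply,
        Matrix.cons_val_zero, Matrix.cons_val_one, Matrix.head_cons]
      rw [show ((2:ℝ) - 0)^2 + ((0:ℝ)-1)^2 = 5 by norm_num]
      rw [show ((1:ℝ) - 0) = 1 by norm_num, norm_one]
      rw [max_eq_left h5']
      linarith
    obtain ⟨z, ⟨hza, hzb⟩, hzBX⟩ :=
      H a b 1 (13/10) one_pos (by norm_num) hbmem ⟨w, hwball, hwmem⟩ hab
    rw [hBX] at hzBX
    obtain ⟨hz1, hz2⟩ := hzBX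
    -- from hza : dist z a ≤ 1, deduce z.1 = (1,0)
    have hza1 : ‖z.1 - a.1‖ ≤ 1 := by
      rw [← dist_eq_norm]
      calc dist z.1 a.1 ≤ dist z a := le_max_left _ _
      _ ≤ 1 := hza
    have hq1 : (z.1 0 - 2)^2 + (z.1 1)^2 ≤ 1 := by
      rw [norm_e2] at hza1
      simp only [PiLp.sub_apply, ha0, ha1, WithLp.equiv_symm_apply, PiLp.toLp_apply, Matrix.cons_val_zero,
        Matrix.cons_val_one, Matrix.head_cons, sub_zero] at hza1
      exact sqrt_le_of_sqrt_le (by positivity) hza1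
    have hq2 : (z.1 0)^2 + (z.1 1)^2 ≤ 1 := by
      rw [norm_e2] at hz1
      exact sqrt_le_of_sqrt_le (by positivity) hz1
    have hz10 : z.1 0 = 1 := by
      have h1 : z.1 0 ≤ 1 := by nlinarith only [hq1, hq2, sq_nonneg (z.1 0 - 1), sq_nonneg (z.1 1)]
      have h2 : 1 ≤ z.1 0 := by nlinarith only [hq1, hq2, sq_nonneg (z.1 0 - 1), sq_nonneg (z.1 1)]
      linarith
    have hz11 : z.1 1 = 0 := by
      have h1 : (z.1 1)^2 ≤ 0 := by nlinarith only [hq1, hq2, hz10]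
      have h2 : (0:ℝ) ≤ (z.1 1)^2 := sq_nonneg _
      have := pow_eq_zero_iff (n := 2) (by norm_num) |>.mp (le_antisymm h1 h2)
      exact this
    -- but dist z b ≥ √2 > 13/10
    have hzbge : Real.sqrt 2 ≤ dist z b := by
      calc Real.sqrt 2 = ‖z.1 - b.1‖ := by
            rw [norm_e2]
            simp only [PiLp.sub_apply, hz10, hz11, hb, WithLp.equiv_symm_apply, PiLp.toLp_apply,
              Matrix.cons_val_zero, Matrix.cons_val_one, Matrix.head_cons]
            norm_num
      _ = dist z.1 b.1 := (dist_eq_norm _ _).symm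
      _ ≤ dist z b := le_max_left _ _
    rw [Metric.mem_closedBall] at hzb
    linarith
end

section
/- Let Y be a closed subspace of a Banach space X and μ a probability measure on Ω. For every x ∈ X, d(x, B_Y) equals the distance in L^p(Ω, X) from the constant function t ↦ x to the closed unit ball B_{L^p(Ω,Y)}, for 1 ≤ p < ∞. In particular, d(x·1, B_{L^p(Ω,Y)}) ≥ d(x, B_Y), proved by averaging: if s = Σ y_i χ_{E_i} ∈ B_{L^p(Ω,Y)} is simple then z = Σ μ(E_i) y_i ∈ B_Y and ‖x − z‖^p ≤ ∫ ‖x − s(t)‖^p dμ(t). -/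
open MeasureTheory
open scoped ENNReal

private lemma le_infDist_aux {α : Type*} [PseudoMetricSpace α] {s : Set α} (hs : s.Nonempty)
    {x : α} {b : ℝ} (h : ∀ y ∈ s, b ≤ dist x y) : b ≤ Metric.infDist x s := by
  by_contra hb
  push_neg at hb
  obtain ⟨y, hy, hlt⟩ := (Metric.infDist_lt_iff hs).1 hb
  exact absurd (h y hy) (not_le.2 hlt)

private lemma norm_integral_le_eLpNorm_toReal {Ω X : Type*} [MeasurableSpace Ω]
    [NormedAddCommGroup X] [NormedSpace ℝ X] [CompleteSpace X]
    (μ : Measure Ω) [IsProbabilityMeasure μ] {p : ℝ≥0∞} (hp1 : 1 ≤ p)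
    {f : Ω → X} (hf : MemLp f p μ) :
    ‖∫ t, f t ∂μ‖ ≤ (eLpNorm f p μ).toReal := by
  calc ‖∫ t, f t ∂μ‖ ≤ ∫ t, ‖f t‖ ∂μ := norm_integral_le_integral_norm f
    _ = (eLpNorm f 1 μ).toReal := by
        rw [integral_norm_eq_lintegral_enorm hf.aestronglyMeasurable,
          eLpNorm_one_eq_lintegral_enorm]
    _ ≤ (eLpNorm f p μ).toReal :=
        ENNReal.toReal_mono hf.eLpNorm_ne_top
          (eLpNorm_le_eLpNorm_of_exponent_le hp1 hf.aestronglyMeasurable)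

/-- over a probability space, for every `x ∈ X` the distance from the
constant function `t ↦ x` to the unit ball `B_{L^p(Ω,Y)}` equals `d(x, B_Y)`
(`1 ≤ p < ∞`). The key averaging step: if `s = Σ yᵢ χ_{Eᵢ}` lies in `B_{L^p(Ω,Y)}`
(i.e. `Σ ‖yᵢ‖^p μ(Eᵢ) ≤ 1` with `yᵢ ∈ Y`), then `z = Σ μ(Eᵢ) yᵢ ∈ B_Y` and
`‖x − z‖^p ≤ Σ ‖x − yᵢ‖^p μ(Eᵢ)`. -/
theorem stmt_15 {X : Type*} [NormedAddCommGroup X] [NormedSpace ℝ X] [CompleteSpace X]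
    (Y : Subspace ℝ X) (hYcl : IsClosed (Y : Set X))
    {Ω : Type*} [MeasurableSpace Ω] (μ : Measure Ω) [IsProbabilityMeasure μ]
    (p : ℝ≥0∞) [hp : Fact (1 ≤ p)] (hp' : p ≠ ∞) :
    (∀ (x : X) (fc : Lp X p μ), (fc : Ω → X) =ᵐ[μ] (fun _ => x) →
      Metric.infDist x {y : X | y ∈ Y ∧ ‖y‖ ≤ 1} =
        Metric.infDist fc {g : Lp X p μ | ‖g‖ ≤ 1 ∧ ∀ᵐ t ∂μ, (g : Ω → X) t ∈ Y}) ∧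
    (∀ (x : X) (n : ℕ) (y : Fin n → X) (E : Fin n → Set Ω),
      (∀ i, MeasurableSet (E i)) → (Pairwise fun i j => Disjoint (E i) (E j)) →
      (⋃ i, E i) = Set.univ → (∀ i, y i ∈ Y) →
      (∑ i, ‖y i‖ ^ p.toReal * (μ (E i)).toReal) ≤ 1 →
      (∑ i, (μ (E i)).toReal • y i) ∈ {z : X | z ∈ Y ∧ ‖z‖ ≤ 1} ∧
      ‖x - ∑ i, (μ (E i)).toReal • y i‖ ^ p.toReal ≤
        ∑ i, ‖x - y i‖ ^ p.toReal * (μ (E i)).toReal) := by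
  have hp0 : p ≠ 0 := (zero_lt_one.trans_le hp.out).ne'
  have hpt1 : (1 : ℝ) ≤ p.toReal := by
    have := ENNReal.toReal_mono hp' hp.out
    simpa using this
  have hpt0 : (0 : ℝ) < p.toReal := zero_lt_one.trans_le hpt1
  constructor
  · intro x fc hfc
    have hBne : Set.Nonempty {y : X | y ∈ Y ∧ ‖y‖ ≤ 1} := ⟨0, Y.zero_mem, by simp⟩
    have hSne : Set.Nonempty {g : Lp X p μ | ‖g‖ ≤ 1 ∧ ∀ᵐ t ∂μ, (g : Ω → X) t ∈ Y} := by
      refine ⟨0, by simp, ?_⟩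
      filter_upwards [Lp.coeFn_zero X p μ] with t ht
      rw [ht]
      exact Y.zero_mem
    apply le_antisymm
    · refine le_infDist_aux hSne fun g hg => ?_
      obtain ⟨hg1, hgY⟩ := hg
      have hgm := Lp.memLp g
      have hgint : Integrable (g : Ω → X) μ := hgm.integrable hp.out
      set z : X := ∫ t, (g : Ω → X) t ∂μ with hz
      have hzY : z ∈ Y := Y.convex.integral_mem hYcl hgY hgint
      have hz1 : ‖z‖ ≤ 1 := by
        have h1 := norm_integral_le_eLpNorm_toReal μ hp.out hgm
        rw [← Lp.norm_def] at h1
        exact h1.trans hg1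
      refine le_trans (Metric.infDist_le_dist_of_mem ⟨hzY, hz1⟩) ?_
      have hxz : x - z = ∫ t, (x - (g : Ω → X) t) ∂μ := by
        rw [integral_sub (integrable_const x) hgint, integral_const]
        simp [measure_univ, hz]
      have hmem : MemLp (fun t => x - (g : Ω → X) t) p μ := (memLp_const x).sub hgm
      have h2 : ‖x - z‖ ≤ (eLpNorm (fun t => x - (g : Ω → X) t) p μ).toReal := by
        rw [hxz]
        exact norm_integral_le_eLpNorm_toReal μ hp.out hmem
      have hae : (fun t => x - (g : Ω → X) t) =ᵐ[μ] ((fc - g : Lp X p μ) : Ω → X) := by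
        filter_upwards [hfc, Lp.coeFn_sub fc g] with t h1' h2'
        rw [h2', Pi.sub_apply, h1']
      rw [dist_eq_norm, dist_eq_norm, Lp.norm_def, ← eLpNorm_congr_ae hae]
      exact h2
    · refine le_infDist_aux hBne fun zy hzy => ?_
      obtain ⟨hzY, hz1⟩ := hzy
      have hconst : Lp.const p μ zy ∈
          {g : Lp X p μ | ‖g‖ ≤ 1 ∧ ∀ᵐ t ∂μ, (g : Ω → X) t ∈ Y} := by
        constructor
        · rw [Lp.norm_const' (μ := μ) (hp_zero := hp0) (hp_top := hp')]
          simpa [measure_univ] using hz1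
        · filter_upwards [Lp.coeFn_const (α := Ω) (μ := μ) (p := p) (c := zy)] with t ht
          rw [ht]
          exact hzY
      refine le_trans (Metric.infDist_le_dist_of_mem hconst) ?_
      have hdist : dist fc (Lp.const p μ zy) = ‖x - zy‖ := by
        have hae : ((fc - Lp.const p μ zy : Lp X p μ) : Ω → X) =ᵐ[μ] (fun _ => x - zy) := by
          filter_upwards [hfc, Lp.coeFn_sub fc (Lp.const p μ zy),
            Lp.coeFn_const (α := Ω) (μ := μ) (p := p) (c := zy)] with t h1 h2 h3
          rw [h2, Pi.sub_apply, h1, h3]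
          rfl
        rw [dist_eq_norm, Lp.norm_def, eLpNorm_congr_ae hae,
          eLpNorm_const _ hp0 (NeZero.ne μ)]
        simp [measure_univ]
      rw [hdist, dist_eq_norm]
  · intro x n y E hEm hEdisj hEuniv hyY hsum
    have hw0 : ∀ i ∈ Finset.univ, (0 : ℝ) ≤ (μ (E i)).toReal := fun i _ =>
      ENNReal.toReal_nonneg
    have hwsum : ∑ i, (μ (E i)).toReal = 1 := by
      have h1 : ∑ i, μ (E i) = 1 := by
        rw [← tsum_fintype (L := SummationFilter.unconditional _), ← measure_iUnion hEdisj hEm, hEuniv, measure_univ]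
      calc ∑ i, (μ (E i)).toReal = (∑ i, μ (E i)).toReal :=
            (ENNReal.toReal_sum fun i _ => measure_ne_top μ _).symm
        _ = 1 := by rw [h1]; simp
    have hsum' : ∑ i, (μ (E i)).toReal * ‖y i‖ ^ p.toReal ≤ 1 := by
      calc ∑ i, (μ (E i)).toReal * ‖y i‖ ^ p.toReal
          = ∑ i, ‖y i‖ ^ p.toReal * (μ (E i)).toReal :=
            Finset.sum_congr rfl fun i _ => mul_comm _ _
        _ ≤ 1 := hsum
    constructor
    · refine ⟨Submodule.sum_mem _ fun i _ => Y.smul_mem _ (hyY i), ?_⟩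
      have hnorm : ‖∑ i, (μ (E i)).toReal • y i‖ ≤ ∑ i, (μ (E i)).toReal * ‖y i‖ := by
        refine (norm_sum_le _ _).trans (Finset.sum_le_sum fun i _ => ?_)
        rw [norm_smul, Real.norm_eq_abs, abs_of_nonneg (hw0 i (Finset.mem_univ i))]
      have hJ : (∑ i, (μ (E i)).toReal * ‖y i‖) ^ p.toReal
          ≤ ∑ i, (μ (E i)).toReal * ‖y i‖ ^ p.toReal :=
        Real.rpow_arith_mean_le_arith_mean_rpow Finset.univ _ _ hw0 hwsum
          (fun i _ => norm_nonneg _) hpt1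
      have hle1 : ‖∑ i, (μ (E i)).toReal • y i‖ ^ p.toReal ≤ 1 := by
        calc ‖∑ i, (μ (E i)).toReal • y i‖ ^ p.toReal
            ≤ (∑ i, (μ (E i)).toReal * ‖y i‖) ^ p.toReal :=
              Real.rpow_le_rpow (norm_nonneg _) hnorm hpt0.le
          _ ≤ ∑ i, (μ (E i)).toReal * ‖y i‖ ^ p.toReal := hJ
          _ ≤ 1 := hsum'
      have h2 : (‖∑ i, (μ (E i)).toReal • y i‖ ^ p.toReal) ^ (1 / p.toReal)
          ≤ (1 : ℝ) ^ (1 / p.toReal) :=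
        Real.rpow_le_rpow (Real.rpow_nonneg (norm_nonneg _) _) hle1 (by positivity)
      rwa [← Real.rpow_mul (norm_nonneg _), mul_one_div_cancel hpt0.ne',
        Real.rpow_one, Real.one_rpow] at h2
    · have hxz : x - ∑ i, (μ (E i)).toReal • y i = ∑ i, (μ (E i)).toReal • (x - y i) := by
        rw [Finset.sum_congr rfl fun i _ => smul_sub ((μ (E i)).toReal) x (y i),
          Finset.sum_sub_distrib, ← Finset.sum_smul, hwsum, one_smul]
      have hnorm : ‖x - ∑ i, (μ (E i)).toReal • y i‖ ≤ ∑ i, (μ (E i)).toReal * ‖x - y i‖ := by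
        rw [hxz]
        refine (norm_sum_le _ _).trans (Finset.sum_le_sum fun i _ => ?_)
        rw [norm_smul, Real.norm_eq_abs, abs_of_nonneg (hw0 i (Finset.mem_univ i))]
      calc ‖x - ∑ i, (μ (E i)).toReal • y i‖ ^ p.toReal
          ≤ (∑ i, (μ (E i)).toReal * ‖x - y i‖) ^ p.toReal :=
            Real.rpow_le_rpow (norm_nonneg _) hnorm hpt0.le
        _ ≤ ∑ i, (μ (E i)).toReal * ‖x - y i‖ ^ p.toReal :=
            Real.rpow_arith_mean_le_arith_mean_rpow Finset.univ _ _ hw0 hwsum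
              (fun i _ => norm_nonneg _) hpt1
        _ = ∑ i, ‖x - y i‖ ^ p.toReal * (μ (E i)).toReal :=
            Finset.sum_congr rfl fun i _ => mul_comm _ _
end

section
/- Let X be a real Banach space with the 3.2 intersection property and Y ⊆ X a closed subspace with the strong 3-ball property (in particular, an M-ideal in X with this property). Then the closed unit ball B_Y has the 1½-ball property in X: if B[x, r₁] ∩ B_Y ≠ ∅ and ‖x − y‖ < r₁ + r₂ for some y ∈ B_Y, then B[x, r₁] ∩ B[y, r₂] ∩ B_Y ≠ ∅. -/
/-!
Given `x`, `y` with `‖x - y‖ < r₁ + r₂`, where `B[x, r₁]` meets `B_Y` and `y ∈ B_Y`, the three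
balls `B[x, r₁]`, `B[y, r₂]` and `B[0, 1]` pairwise intersect (the first two at a point of the
segment `[x, y]`), so by the 3.2.I.P they have a common point. All three meet `Y`, so the strong
3-ball property moves that common point into `Y`, i.e. into `B[x, r₁] ∩ B[y, r₂] ∩ B_Y`.
-/

open Metric

def ThreeTwoIntersectionProperty (X : Type*) [PseudoMetricSpace X] : Prop :=
  ∀ (c₁ c₂ c₃ : X) (r₁ r₂ r₃ : ℝ),
    (closedBall c₁ r₁ ∩ closedBall c₂ r₂).Nonempty →
    (closedBall c₁ r₁ ∩ closedBall c₃ r₃).Nonempty →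
    (closedBall c₂ r₂ ∩ closedBall c₃ r₃).Nonempty →
    (closedBall c₁ r₁ ∩ closedBall c₂ r₂ ∩ closedBall c₃ r₃).Nonempty

section

variable {X : Type*}

def StrongThreeBallProperty [PseudoMetricSpace X] (Y : Set X) : Prop :=
  ∀ (c₁ c₂ c₃ : X) (r₁ r₂ r₃ : ℝ),
    (closedBall c₁ r₁ ∩ Y).Nonempty →
    (closedBall c₂ r₂ ∩ Y).Nonempty →
    (closedBall c₃ r₃ ∩ Y).Nonempty →
    (closedBall c₁ r₁ ∩ closedBall c₂ r₂ ∩ closedBall c₃ r₃).Nonempty →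
    (closedBall c₁ r₁ ∩ closedBall c₂ r₂ ∩ closedBall c₃ r₃ ∩ Y).Nonempty

def OneAndHalfBallProperty [PseudoMetricSpace X] (B : Set X) : Prop :=
  ∀ (x y : X) (r₁ r₂ : ℝ), 0 < r₁ → 0 < r₂ → y ∈ B → (closedBall x r₁ ∩ B).Nonempty →
    dist x y < r₁ + r₂ → (closedBall x r₁ ∩ closedBall y r₂ ∩ B).Nonempty

theorem closedBall_inter_closedBall_nonempty [SeminormedAddCommGroup X] [NormedSpace ℝ X]
    {x y : X} {r₁ r₂ : ℝ} (hr₁ : 0 ≤ r₁) (hr₂ : 0 ≤ r₂) (h : dist x y ≤ r₁ + r₂) :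
    (closedBall x r₁ ∩ closedBall y r₂).Nonempty := by
  obtain ⟨z, hxz, hzy⟩ := exists_dist_le_le hr₁ hr₂ (by rwa [add_comm] at h)
  exact ⟨z, by rwa [mem_closedBall, dist_comm], by rwa [mem_closedBall]⟩

theorem StrongThreeBallProperty.oneAndHalfBallProperty_closedBall_inter
    [SeminormedAddCommGroup X] [NormedSpace ℝ X] (hX : ThreeTwoIntersectionProperty X)
    {Y : Set X} (hY : StrongThreeBallProperty Y) (c : X) (r : ℝ) :
    OneAndHalfBallProperty (closedBall c r ∩ Y) := by
  rintro x y r₁ r₂ hr₁ hr₂ ⟨hyc, hyY⟩ ⟨w, hwx, hwc, hwY⟩ hxy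
  have hyy : y ∈ closedBall y r₂ := mem_closedBall_self hr₂.le
  have hxyc : (closedBall x r₁ ∩ closedBall y r₂ ∩ closedBall c r).Nonempty :=
    hX x y c r₁ r₂ r (closedBall_inter_closedBall_nonempty hr₁.le hr₂.le hxy.le)
      ⟨w, hwx, hwc⟩ ⟨y, hyy, hyc⟩
  obtain ⟨z, ⟨⟨hzx, hzy⟩, hzc⟩, hzY⟩ :=
    hY x y c r₁ r₂ r ⟨w, hwx, hwY⟩ ⟨y, hyy, hyY⟩ ⟨y, hyc, hyY⟩ hxyc
  exact ⟨z, ⟨hzx, hzy⟩, hzc, hzY⟩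

end

theorem stmt_17_general {X : Type*} [NormedAddCommGroup X] [NormedSpace ℝ X]
    (Y : Subspace ℝ X)
    (h32IP : ∀ (c₁ c₂ c₃ : X) (r₁ r₂ r₃ : ℝ),
      (Metric.closedBall c₁ r₁ ∩ Metric.closedBall c₂ r₂).Nonempty →
      (Metric.closedBall c₁ r₁ ∩ Metric.closedBall c₃ r₃).Nonempty →
      (Metric.closedBall c₂ r₂ ∩ Metric.closedBall c₃ r₃).Nonempty →
      (Metric.closedBall c₁ r₁ ∩ Metric.closedBall c₂ r₂ ∩ Metric.closedBall c₃ r₃).Nonempty)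
    (hstrong3ball : ∀ (c₁ c₂ c₃ : X) (r₁ r₂ r₃ : ℝ),
      (Metric.closedBall c₁ r₁ ∩ (Y : Set X)).Nonempty →
      (Metric.closedBall c₂ r₂ ∩ (Y : Set X)).Nonempty →
      (Metric.closedBall c₃ r₃ ∩ (Y : Set X)).Nonempty →
      (Metric.closedBall c₁ r₁ ∩ Metric.closedBall c₂ r₂ ∩ Metric.closedBall c₃ r₃).Nonempty →
      (Metric.closedBall c₁ r₁ ∩ Metric.closedBall c₂ r₂ ∩ Metric.closedBall c₃ r₃ ∩
        (Y : Set X)).Nonempty) :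
    ∀ (x y : X) (r₁ r₂ : ℝ), 0 < r₁ → 0 < r₂ → y ∈ {z : X | z ∈ Y ∧ ‖z‖ ≤ 1} →
      (Metric.closedBall x r₁ ∩ {z : X | z ∈ Y ∧ ‖z‖ ≤ 1}).Nonempty → ‖x - y‖ < r₁ + r₂ →
      (Metric.closedBall x r₁ ∩ Metric.closedBall y r₂ ∩ {z : X | z ∈ Y ∧ ‖z‖ ≤ 1}).Nonempty := by
  have hBY : {z : X | z ∈ Y ∧ ‖z‖ ≤ 1} = closedBall 0 1 ∩ (Y : Set X) := by
    ext z
    simp [and_comm]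
  intro x y r₁ r₂ hr₁ hr₂ hy hx hxy
  rw [hBY] at hy hx ⊢
  exact StrongThreeBallProperty.oneAndHalfBallProperty_closedBall_inter h32IP hstrong3ball 0 1
    x y r₁ r₂ hr₁ hr₂ hy hx (by rwa [dist_eq_norm])

/-- If a real Banach space `X` has the 3.2 intersection property and the
closed subspace `Y` has the strong 3-ball property, then the closed unit ball `B_Y` has
the 1½-ball property in `X`. -/
theorem stmt_17 {X : Type*} [NormedAddCommGroup X] [NormedSpace ℝ X] [CompleteSpace X]
    (Y : Subspace ℝ X) (hYcl : IsClosed (Y : Set X))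
    (h32IP : ∀ (c₁ c₂ c₃ : X) (r₁ r₂ r₃ : ℝ),
      (Metric.closedBall c₁ r₁ ∩ Metric.closedBall c₂ r₂).Nonempty →
      (Metric.closedBall c₁ r₁ ∩ Metric.closedBall c₃ r₃).Nonempty →
      (Metric.closedBall c₂ r₂ ∩ Metric.closedBall c₃ r₃).Nonempty →
      (Metric.closedBall c₁ r₁ ∩ Metric.closedBall c₂ r₂ ∩ Metric.closedBall c₃ r₃).Nonempty)
    (hstrong3ball : ∀ (c₁ c₂ c₃ : X) (r₁ r₂ r₃ : ℝ),
      (Metric.closedBall c₁ r₁ ∩ (Y : Set X)).Nonempty →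
      (Metric.closedBall c₂ r₂ ∩ (Y : Set X)).Nonempty →
      (Metric.closedBall c₃ r₃ ∩ (Y : Set X)).Nonempty →
      (Metric.closedBall c₁ r₁ ∩ Metric.closedBall c₂ r₂ ∩ Metric.closedBall c₃ r₃).Nonempty →
      (Metric.closedBall c₁ r₁ ∩ Metric.closedBall c₂ r₂ ∩ Metric.closedBall c₃ r₃ ∩
        (Y : Set X)).Nonempty) :
    ∀ (x y : X) (r₁ r₂ : ℝ), 0 < r₁ → 0 < r₂ → y ∈ {z : X | z ∈ Y ∧ ‖z‖ ≤ 1} →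
      (Metric.closedBall x r₁ ∩ {z : X | z ∈ Y ∧ ‖z‖ ≤ 1}).Nonempty → ‖x - y‖ < r₁ + r₂ →
      (Metric.closedBall x r₁ ∩ Metric.closedBall y r₂ ∩ {z : X | z ∈ Y ∧ ‖z‖ ≤ 1}).Nonempty :=
  stmt_17_general Y h32IP hstrong3ball
end

section
/- Let Y be a closed subspace of a Banach space X such that B_{L^p(I,Y)} is strongly proximinal in L^p(I, X) for some 1 ≤ p < ∞, where I = [0,1] with Lebesgue measure. Then B_Y is strongly proximinal in X: given x ∈ X and a sequence (y_n) ⊆ B_Y with ‖x − y_n‖ → d(x, B_Y), one has d(y_n, P_{B_Y}(x)) → 0, using that for h ∈ P_{B_{L^p(I,Y)}}(x·1) the average z = ∫_I h(t) dt lies in P_{B_Y}(x) and ‖y_n − ∫ h_n‖ ≤ ‖y_n·1 − h_n‖_p. -/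
open MeasureTheory
open scoped ENNReal

/-- The closed unit ball of `L^p(μ, Y)` viewed inside `L^p(μ, X)`. -/
def LpYBall (X : Type*) [NormedAddCommGroup X] (Y : Set X) (p : ℝ≥0∞)
    {Ω : Type*} [MeasurableSpace Ω] (μ : Measure Ω) : Set (Lp X p μ) :=
  {g : Lp X p μ | ‖g‖ ≤ 1 ∧ ∀ᵐ t ∂μ, (g : Ω → X) t ∈ Y}

section Aux

variable {X : Type*} [NormedAddCommGroup X] [NormedSpace ℝ X] [CompleteSpace X]
  {Ω : Type*} [MeasurableSpace Ω] {μ : Measure Ω} [IsProbabilityMeasure μ]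
  {p : ℝ≥0∞} [hp : Fact (1 ≤ p)]

lemma aux_le_infDist {A : Type*} [MetricSpace A] {s : Set A} {x : A} {b : ℝ}
    (hs : s.Nonempty) (h : ∀ y ∈ s, b ≤ dist x y) : b ≤ Metric.infDist x s := by
  rw [Metric.infDist_eq_iInf]
  haveI := hs.to_subtype
  exact le_ciInf fun y => h y y.2

lemma aux_avg_norm_le (F : Lp X p μ) : ‖∫ t, F t ∂μ‖ ≤ ‖F‖ := by
  calc ‖∫ t, F t ∂μ‖ ≤ ∫ t, ‖F t‖ ∂μ := norm_integral_le_integral_norm _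
    _ = (eLpNorm (F : Ω → X) 1 μ).toReal := by
        rw [eLpNorm_one_eq_lintegral_enorm,
          integral_norm_eq_lintegral_enorm (Lp.aestronglyMeasurable F)]
    _ ≤ (eLpNorm (F : Ω → X) p μ).toReal := ENNReal.toReal_mono (Lp.eLpNorm_ne_top F)
        (eLpNorm_le_eLpNorm_of_exponent_le hp.out (Lp.aestronglyMeasurable F))
    _ = ‖F‖ := (Lp.norm_def F).symm

lemma aux_avg_sub (F G : Lp X p μ) :
    ∫ t, (F - G : Lp X p μ) t ∂μ = (∫ t, F t ∂μ) - ∫ t, G t ∂μ := by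
  have hF : Integrable (F : Ω → X) μ := (Lp.memLp F).integrable hp.out
  have hG : Integrable (G : Ω → X) μ := (Lp.memLp G).integrable hp.out
  rw [integral_congr_ae (Lp.coeFn_sub F G)]
  exact integral_sub hF hG

lemma aux_avg_const (x : X) : ∫ t, (Lp.const p μ x : Ω → X) t ∂μ = x := by
  rw [integral_congr_ae (Lp.coeFn_const p μ x)]
  simp

lemma aux_norm_const (x : X) (hp0 : p ≠ 0) : ‖Lp.const p μ x‖ = ‖x‖ := by
  rw [Lp.norm_const _ _ _ hp0]
  simp

end Aux

/-- If the unit ball `B_{L^p(I,Y)}` is strongly proximinal in `L^p(I,X)`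
for some `1 ≤ p < ∞` (`I = [0,1]` with Lebesgue measure), then `B_Y` is strongly
proximinal in `X`. -/
theorem stmt_18 {X : Type*} [NormedAddCommGroup X] [NormedSpace ℝ X] [CompleteSpace X]
    (Y : Subspace ℝ X) (hYcl : IsClosed (Y : Set X))
    (p : ℝ≥0∞) [hp : Fact (1 ≤ p)] (hp' : p ≠ ∞)
    (hprox : ∀ F : Lp X p ((volume : Measure ℝ).restrict (Set.Icc 0 1)),
      ∃ G ∈ LpYBall X (Y : Set X) p ((volume : Measure ℝ).restrict (Set.Icc 0 1)),
        ‖F - G‖ = Metric.infDist F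
          (LpYBall X (Y : Set X) p ((volume : Measure ℝ).restrict (Set.Icc 0 1))))
    (hsp : ∀ F : Lp X p ((volume : Measure ℝ).restrict (Set.Icc 0 1)), ∀ ε > (0 : ℝ),
      ∃ δ > (0 : ℝ), ∀ G ∈ LpYBall X (Y : Set X) p ((volume : Measure ℝ).restrict (Set.Icc 0 1)),
        ‖F - G‖ ≤ Metric.infDist F
            (LpYBall X (Y : Set X) p ((volume : Measure ℝ).restrict (Set.Icc 0 1))) + δ →
        ∃ H, (H ∈ LpYBall X (Y : Set X) p ((volume : Measure ℝ).restrict (Set.Icc 0 1)) ∧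
            ‖F - H‖ = Metric.infDist F
              (LpYBall X (Y : Set X) p ((volume : Measure ℝ).restrict (Set.Icc 0 1)))) ∧
          ‖G - H‖ ≤ ε) :
    (∀ x : X, ∃ y ∈ {z : X | z ∈ Y ∧ ‖z‖ ≤ 1},
      ‖x - y‖ = Metric.infDist x {z : X | z ∈ Y ∧ ‖z‖ ≤ 1}) ∧
    (∀ x : X, ∀ ε > (0 : ℝ), ∃ δ > (0 : ℝ), ∀ z ∈ {w : X | w ∈ Y ∧ ‖w‖ ≤ 1},
      ‖x - z‖ ≤ Metric.infDist x {w : X | w ∈ Y ∧ ‖w‖ ≤ 1} + δ →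
      ∃ w, (w ∈ {v : X | v ∈ Y ∧ ‖v‖ ≤ 1} ∧
          ‖x - w‖ = Metric.infDist x {v : X | v ∈ Y ∧ ‖v‖ ≤ 1}) ∧ ‖z - w‖ ≤ ε) := by
  set μ := (volume : Measure ℝ).restrict (Set.Icc (0:ℝ) 1) with hμdef
  haveI : IsProbabilityMeasure μ := ⟨by
    rw [hμdef, Measure.restrict_apply_univ, Real.volume_Icc]; norm_num⟩
  have hp0 : p ≠ 0 := by
    intro h; exact absurd (h ▸ hp.out) (by norm_num)
  set B : Set X := {z : X | z ∈ Y ∧ ‖z‖ ≤ 1} with hBdef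
  set LB := LpYBall X (Y : Set X) p μ with hLBdef
  -- constant functions of elements of B lie in LB
  have hc_mem : ∀ z ∈ B, Lp.const p μ z ∈ LB := by
    intro z hz
    refine ⟨by rw [aux_norm_const z hp0]; exact hz.2, ?_⟩
    filter_upwards [Lp.coeFn_const p μ z] with t ht
    rw [ht]; exact hz.1
  -- averages of elements of LB lie in B
  have h_avg_mem : ∀ G ∈ LB, (∫ t, G t ∂μ) ∈ B := by
    intro G hG
    have hGi : Integrable (G : ℝ → X) μ := (Lp.memLp G).integrable hp.out
    refine ⟨(Y.convex).integral_mem hYcl hG.2 hGi, ?_⟩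
    exact (aux_avg_norm_le G).trans hG.1
  have hBne : B.Nonempty := ⟨0, Y.zero_mem, by simp⟩
  have hLBne : LB.Nonempty := ⟨_, hc_mem 0 ⟨Y.zero_mem, by simp⟩⟩
  -- key inequality
  have key : ∀ (x : X), ∀ G : Lp X p μ, ‖x - ∫ t, G t ∂μ‖ ≤ ‖Lp.const p μ x - G‖ := by
    intro x G
    have : x - ∫ t, G t ∂μ = ∫ t, (Lp.const p μ x - G : Lp X p μ) t ∂μ := by
      rw [aux_avg_sub, aux_avg_const]
    rw [this]
    exact aux_avg_norm_le _
  -- distance equality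
  have hdist : ∀ x : X, Metric.infDist (Lp.const p μ x) LB = Metric.infDist x B := by
    intro x
    apply le_antisymm
    · refine aux_le_infDist hBne fun z hz => ?_
      have h1 : Metric.infDist (Lp.const p μ x) LB ≤ dist (Lp.const p μ x) (Lp.const p μ z) :=
        Metric.infDist_le_dist_of_mem (hc_mem z hz)
      rwa [dist_eq_norm, ← map_sub, aux_norm_const _ hp0, ← dist_eq_norm] at h1
    · refine aux_le_infDist hLBne fun G hG => ?_
      have h1 : Metric.infDist x B ≤ dist x (∫ t, G t ∂μ) :=
        Metric.infDist_le_dist_of_mem (h_avg_mem G hG)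
      refine h1.trans ?_
      rw [dist_eq_norm, dist_eq_norm]
      exact key x G
  -- common step: from H a best approximation of const x, derive best approximation in X
  have best : ∀ (x : X) (H : Lp X p μ), H ∈ LB →
      ‖Lp.const p μ x - H‖ = Metric.infDist (Lp.const p μ x) LB →
      (∫ t, H t ∂μ) ∈ B ∧ ‖x - ∫ t, H t ∂μ‖ = Metric.infDist x B := by
    intro x H hH heq
    refine ⟨h_avg_mem H hH, le_antisymm ?_ ?_⟩
    · calc ‖x - ∫ t, H t ∂μ‖ ≤ ‖Lp.const p μ x - H‖ := key x H
        _ = Metric.infDist x B := by rw [heq, hdist]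
    · rw [← dist_eq_norm]
      exact Metric.infDist_le_dist_of_mem (h_avg_mem H hH)
  constructor
  · -- proximinality
    intro x
    obtain ⟨G, hG, hGeq⟩ := hprox (Lp.const p μ x)
    obtain ⟨hmem, heq⟩ := best x G hG hGeq
    exact ⟨_, hmem, heq⟩
  · -- strong proximinality
    intro x ε hε
    obtain ⟨δ, hδ, hH⟩ := hsp (Lp.const p μ x) ε hε
    refine ⟨δ, hδ, fun z hz hzd => ?_⟩
    have hcz : Lp.const p μ z ∈ LB := hc_mem z hz
    have hdz : ‖Lp.const p μ x - Lp.const p μ z‖ ≤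
        Metric.infDist (Lp.const p μ x) LB + δ := by
      rw [← map_sub, aux_norm_const _ hp0, hdist]
      exact hzd
    obtain ⟨H, ⟨hHmem, hHeq⟩, hGH⟩ := hH (Lp.const p μ z) hcz hdz
    obtain ⟨hmem, heq⟩ := best x H hHmem hHeq
    refine ⟨∫ t, H t ∂μ, ⟨hmem, heq⟩, ?_⟩
    calc ‖z - ∫ t, H t ∂μ‖ ≤ ‖Lp.const p μ z - H‖ := key z H
      _ ≤ ε := hGH
end

section
/- Let Y be a closed subspace of a Banach space X such that L^p(I, Y) is ball proximinal in L^p(I, X) for some 1 ≤ p < ∞ (I = [0,1] with Lebesgue measure). Then Y is ball proximinal in X: for x ∈ X, a minimizing sequence (y_n) ⊆ B_Y obtained by averaging simple approximations of a best approximation g ∈ B_{L^p(I,Y)} to the constant function x converges to y₀ = ∫_I g(t) dt ∈ B_Y with ‖x − y₀‖ = d(x, B_Y). -/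
open MeasureTheory
open scoped ENNReal

/-- If `L^p(I, Y)` is ball proximinal in `L^p(I, X)` for some `1 ≤ p < ∞`
(`I = [0,1]` with Lebesgue measure), i.e. the unit ball `B_{L^p(I,Y)}` is proximinal,
then `Y` is ball proximinal in `X`: every `x ∈ X` has a best approximation in `B_Y`. -/
theorem stmt_19 {X : Type*} [NormedAddCommGroup X] [NormedSpace ℝ X] [CompleteSpace X]
    (Y : Subspace ℝ X) (hYcl : IsClosed (Y : Set X))
    (p : ℝ≥0∞) [hp : Fact (1 ≤ p)] (hp' : p ≠ ∞)
    (hball : ∀ F : Lp X p ((volume : Measure ℝ).restrict (Set.Icc 0 1)),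
      ∃ G ∈ LpYBall X (Y : Set X) p ((volume : Measure ℝ).restrict (Set.Icc 0 1)),
        ‖F - G‖ = Metric.infDist F
          (LpYBall X (Y : Set X) p ((volume : Measure ℝ).restrict (Set.Icc 0 1)))) :
    ∀ x : X, ∃ y ∈ {z : X | z ∈ Y ∧ ‖z‖ ≤ 1},
      ‖x - y‖ = Metric.infDist x {z : X | z ∈ Y ∧ ‖z‖ ≤ 1} := by
  intro x
  set μ := (volume : Measure ℝ).restrict (Set.Icc 0 1) with hμdef
  haveI : IsProbabilityMeasure μ := ⟨by
    rw [hμdef, Measure.restrict_apply_univ, Real.volume_Icc]; norm_num⟩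
  set B : Set X := {z : X | z ∈ Y ∧ ‖z‖ ≤ 1} with hBdef
  have hBne : B.Nonempty := ⟨0, Y.zero_mem, by simp⟩
  have hp0 : p ≠ 0 := by
    intro h; exact absurd (h ▸ hp.out) (by norm_num)
  -- constant functions are in Lp
  have hconstmem : ∀ c : X, MemLp (fun _ : ℝ => c) p μ := fun c => memLp_const c
  have hnormconst : ∀ c : X, ‖(hconstmem c).toLp _‖ = ‖c‖ := by
    intro c
    rw [Lp.norm_toLp _ (hconstmem c)]
    rcases eq_or_ne c 0 with rfl | hc
    · simp
    · rw [eLpNorm_const c hp0 (IsProbabilityMeasure.ne_zero μ)]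
      simp [measure_univ]
  set F := (hconstmem x).toLp _ with hF
  obtain ⟨G, ⟨hG1, hGY⟩, hGdist⟩ := hball F
  have hGmem := Lp.memLp G
  have hGint : Integrable (G : ℝ → X) μ := hGmem.integrable hp.out
  set y := ∫ t, (G : ℝ → X) t ∂μ with hy
  have hyY : y ∈ (Y : Set X) := Y.convex.integral_mem hYcl hGY hGint
  -- L1 norm ≤ Lp norm helper
  have hL1 : ∀ f : ℝ → X, MemLp f p μ →
      ∫ t, ‖f t‖ ∂μ ≤ (eLpNorm f p μ).toReal := by
    intro f hfp
    have h1 : eLpNorm f 1 μ ≤ eLpNorm f p μ :=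
      eLpNorm_le_eLpNorm_of_exponent_le hp.out hfp.1
    have h2 : ∫ t, ‖f t‖ ∂μ = (eLpNorm f 1 μ).toReal := by
      rw [eLpNorm_one_eq_lintegral_enorm, integral_norm_eq_lintegral_enorm hfp.1]
    rw [h2]
    exact ENNReal.toReal_mono hfp.2.ne h1
  -- norm bound on y
  have hGnorm : ‖G‖ = (eLpNorm (G : ℝ → X) p μ).toReal := Lp.norm_def G
  have hy1 : ‖y‖ ≤ 1 := by
    calc ‖y‖ ≤ ∫ t, ‖(G : ℝ → X) t‖ ∂μ := norm_integral_le_integral_norm _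
    _ ≤ (eLpNorm (G : ℝ → X) p μ).toReal := hL1 _ hGmem
    _ = ‖G‖ := hGnorm.symm
    _ ≤ 1 := hG1
  refine ⟨y, ⟨hyY, hy1⟩, le_antisymm ?_ (by simpa [dist_eq_norm] using Metric.infDist_le_dist_of_mem (show y ∈ B from ⟨hyY, hy1⟩))⟩
  -- ‖x - y‖ ≤ infDist x B
  have hxy : x - y = ∫ t, (x - (G : ℝ → X) t) ∂μ := by
    rw [integral_sub (integrable_const x) hGint, integral_const]
    simp [measure_univ, hy]
  have hsubmem : MemLp (fun t : ℝ => x - (G : ℝ → X) t) p μ :=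
    (hconstmem x).sub hGmem
  have hFGae : (↑(F - G) : ℝ → X) =ᵐ[μ] fun t => x - (G : ℝ → X) t := by
    filter_upwards [Lp.coeFn_sub F G, MemLp.coeFn_toLp (hconstmem x)] with t h1 h2
    rw [h1, Pi.sub_apply, h2]
  have hFGnorm : ‖F - G‖ = (eLpNorm (fun t : ℝ => x - (G : ℝ → X) t) p μ).toReal := by
    rw [Lp.norm_def, eLpNorm_congr_ae hFGae]
  have step1 : ‖x - y‖ ≤ ‖F - G‖ := by
    rw [hxy, hFGnorm]
    calc ‖∫ t, (x - (G : ℝ → X) t) ∂μ‖ ≤ ∫ t, ‖x - (G : ℝ → X) t‖ ∂μ :=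
      norm_integral_le_integral_norm _
    _ ≤ _ := hL1 _ hsubmem
  have step2 : Metric.infDist F (LpYBall X (Y : Set X) p μ) ≤ Metric.infDist x B := by
    rw [Metric.infDist_eq_iInf (s := B)]
    haveI : Nonempty B := hBne.to_subtype
    refine le_ciInf fun zz => ?_
    obtain ⟨z, hz⟩ := zz
    set Z := (hconstmem z).toLp _ with hZ
    have hZmem : Z ∈ LpYBall X (Y : Set X) p μ := by
      refine ⟨by rw [hnormconst z]; exact hz.2, ?_⟩
      filter_upwards [MemLp.coeFn_toLp (hconstmem z)] with t ht
      rw [ht]; exact hz.1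
    have hZae : (↑(F - Z) : ℝ → X) =ᵐ[μ] fun _ => x - z := by
      filter_upwards [Lp.coeFn_sub F Z, MemLp.coeFn_toLp (hconstmem x),
        MemLp.coeFn_toLp (hconstmem z)] with t h1 h2 h3
      rw [h1, Pi.sub_apply, h2, h3]
    have hZnorm : ‖F - Z‖ = ‖x - z‖ := by
      rw [Lp.norm_def, eLpNorm_congr_ae hZae,
        eLpNorm_const _ hp0 (IsProbabilityMeasure.ne_zero μ)]
      simp [measure_univ]
    calc Metric.infDist F (LpYBall X (Y : Set X) p μ) ≤ dist F Z :=
      Metric.infDist_le_dist_of_mem hZmem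
    _ = ‖F - Z‖ := dist_eq_norm F Z
    _ = dist x z := by rw [hZnorm, dist_eq_norm]
  calc ‖x - y‖ ≤ ‖F - G‖ := step1
  _ = Metric.infDist F (LpYBall X (Y : Set X) p μ) := hGdist
  _ ≤ Metric.infDist x B := step2
end
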